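/- arXiv:2410.23869 — 12 statements merged into one kernel-verified Lean document; each statement's English description precedes it below -/
import Mathlib

section
/- Let (p,H) be an apportionment instance, let δ₁, δ₂ ∈ [0,1] with δ₁ < δ₂, and let x ∈ f(p,H;δ₁) ∩ f(p,H;δ₂). Then for every δ ∈ [δ₁, δ₂] one has x ∈ f(p,H;δ). -/
open scoped Classical
open Set

noncomputable section

/-- The stationary rounding rule `⟦r⟧_δ ⊆ ℕ`. -/
def roundSet (δ r : ℝ) : Set ℕ :=
  {x | (r < δ ∧ x = 0) ∨
       (∃ t : ℕ, x = t ∧ (t : ℝ) - 1 + δ < r ∧ r < (t : ℝ) + δ) ∨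
       (∃ t : ℕ, (x = t ∨ x = t + 1) ∧ r = (t : ℝ) + δ)}

/-- The output set `f(p,H;δ)` of the stationary `δ`-divisor method. -/
def divisorOutput {n : ℕ} (p : Fin n → ℕ) (H : ℕ) (δ : ℝ) : Set (Fin n → ℕ) :=
  {x | (∑ i, x i) = H ∧ ∃ lam : ℝ, 0 < lam ∧ ∀ i, x i ∈ roundSet δ (lam * (p i : ℝ))}

/-- The quota `q_i = p_i · H / P` of state `i`. -/
def quota {n : ℕ} (p : Fin n → ℕ) (H : ℕ) (i : Fin n) : ℝ :=
  (p i : ℝ) * (H : ℝ) / (∑ j, (p j : ℝ))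

/-! For positive `r`, membership `x ∈ ⟦r⟧_δ` is a pair of inequalities that are linear in
`(δ, r)`, so the set of pairs `(δ, λ)` witnessing `x ∈ f(p,H;δ)` is convex. -/

lemma mem_roundSet_iff {δ r : ℝ} (hδ : δ ≤ 1) (hr : 0 < r) (x : ℕ) :
    x ∈ roundSet δ r ↔ (x : ℝ) - 1 + δ ≤ r ∧ r ≤ x + δ := by
  constructor
  · rintro (⟨h, rfl⟩ | ⟨t, rfl, h1, h2⟩ | ⟨t, rfl | rfl, h⟩)
    · constructor <;> simp <;> linarith
    · exact ⟨h1.le, h2.le⟩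
    · constructor <;> linarith
    · push_cast; constructor <;> linarith
  · rintro ⟨hlo, hhi⟩
    rcases hhi.eq_or_lt with hhi | hhi
    · exact Or.inr (Or.inr ⟨x, Or.inl rfl, hhi⟩)
    rcases hlo.eq_or_lt with hlo | hlo
    · obtain ⟨t, rfl⟩ : ∃ t, x = t + 1 := by
        refine Nat.exists_eq_add_one.mpr (Nat.pos_of_ne_zero ?_)
        rintro rfl
        norm_num at hlo
        linarith
      refine Or.inr (Or.inr ⟨t, Or.inr rfl, ?_⟩)
      push_cast at hlo
      linarith
    · exact Or.inr (Or.inl ⟨x, rfl, hlo, hhi⟩)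

lemma mem_roundSet_convex_comb {δ₁ δ₂ r₁ r₂ a b : ℝ} {x : ℕ} (hδ₁ : δ₁ ≤ 1) (hδ₂ : δ₂ ≤ 1)
    (hr₁ : 0 < r₁) (hr₂ : 0 < r₂) (ha : 0 ≤ a) (hb : 0 ≤ b) (hab : a + b = 1)
    (h₁ : x ∈ roundSet δ₁ r₁) (h₂ : x ∈ roundSet δ₂ r₂) :
    x ∈ roundSet (a * δ₁ + b * δ₂) (a * r₁ + b * r₂) := by
  have hδ : a * δ₁ + b * δ₂ ≤ 1 := by nlinarith
  have hr : 0 < a * r₁ + b * r₂ := convex_Ioi (0 : ℝ) hr₁ hr₂ ha hb hab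
  rw [mem_roundSet_iff hδ₁ hr₁] at h₁
  rw [mem_roundSet_iff hδ₂ hr₂] at h₂
  rw [mem_roundSet_iff hδ hr]
  constructor <;> nlinarith [h₁.1, h₁.2, h₂.1, h₂.2]

lemma mem_divisorOutput_convex_comb {n : ℕ} {p : Fin n → ℕ} (hp : ∀ i, 0 < p i) {H : ℕ}
    {δ₁ δ₂ a b : ℝ} {x : Fin n → ℕ} (hδ₁ : δ₁ ≤ 1) (hδ₂ : δ₂ ≤ 1)
    (ha : 0 ≤ a) (hb : 0 ≤ b) (hab : a + b = 1)
    (h₁ : x ∈ divisorOutput p H δ₁) (h₂ : x ∈ divisorOutput p H δ₂) :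
    x ∈ divisorOutput p H (a * δ₁ + b * δ₂) := by
  obtain ⟨hsum, lam₁, hlam₁, hx₁⟩ := h₁
  obtain ⟨-, lam₂, hlam₂, hx₂⟩ := h₂
  refine ⟨hsum, a * lam₁ + b * lam₂, convex_Ioi (0 : ℝ) hlam₁ hlam₂ ha hb hab, fun i => ?_⟩
  have hpi : (0 : ℝ) < p i := by exact_mod_cast hp i
  have key := mem_roundSet_convex_comb hδ₁ hδ₂ (mul_pos hlam₁ hpi) (mul_pos hlam₂ hpi)
    ha hb hab (hx₁ i) (hx₂ i)
  rwa [← mul_assoc, ← mul_assoc, ← add_mul] at key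

theorem stmt_0_general {n : ℕ} (p : Fin n → ℕ) (hp : ∀ i, 0 < p i)
    (H : ℕ) (δ₁ δ₂ : ℝ) (hδ₁ : δ₁ ∈ Set.Icc (0 : ℝ) 1)
    (hδ₂ : δ₂ ∈ Set.Icc (0 : ℝ) 1) (hlt : δ₁ < δ₂) (x : Fin n → ℕ)
    (hx : x ∈ divisorOutput p H δ₁ ∩ divisorOutput p H δ₂)
    (δ : ℝ) (hδ : δ ∈ Set.Icc δ₁ δ₂) :
    x ∈ divisorOutput p H δ := by
  rw [← segment_eq_Icc hlt.le] at hδ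
  obtain ⟨a, b, ha, hb, hab, rfl⟩ := hδ
  exact mem_divisorOutput_convex_comb hp hδ₁.2 hδ₂.2 ha hb hab hx.1 hx.2

/-- if `x` is output by both the `δ₁`- and the `δ₂`-divisor method, then it is
output by the `δ`-divisor method for every `δ ∈ [δ₁, δ₂]`. -/
theorem stmt_0 {n : ℕ} (hn : 1 ≤ n) (p : Fin n → ℕ) (hp : ∀ i, 0 < p i)
    (H : ℕ) (hH : 1 ≤ H) (δ₁ δ₂ : ℝ) (hδ₁ : δ₁ ∈ Set.Icc (0 : ℝ) 1)
    (hδ₂ : δ₂ ∈ Set.Icc (0 : ℝ) 1) (hlt : δ₁ < δ₂) (x : Fin n → ℕ)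
    (hx : x ∈ divisorOutput p H δ₁ ∩ divisorOutput p H δ₂)
    (δ : ℝ) (hδ : δ ∈ Set.Icc δ₁ δ₂) :
    x ∈ divisorOutput p H δ :=
  stmt_0_general p hp H δ₁ δ₂ hδ₁ hδ₂ hlt x hx δ hδ
end
end

section
/- For every apportionment instance (p,H) there exist τ, τ̄ ∈ [0,1] with τ ≤ τ̄ such that: (i) for every δ ∈ [0, τ̄], every x ∈ f(p,H;δ), and every i ∈ [n], x_i ≤ ⌈q_i⌉; and (ii) for every δ ∈ [τ, 1], every x ∈ f(p,H;δ), and every i ∈ [n], x_i ≥ ⌊q_i⌋. -/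
/-!
A `δ`-divisor apportionment `x` with multiplier `λ` satisfies `λ p_i - δ ≤ x_i ≤ λ p_i - δ + 1`.
With `P = Σ p_j`, an upper-quota violation forces `λ ≥ H / P`; since the seats sum to `H`, some
state is then strictly below its quota, hence at least `1 / P` below it (as `P q_j ∈ ℕ`), and
this gives `δ ≥ 1 / P`. Symmetrically a lower-quota violation forces `δ ≤ 1 - 1 / P`, and an
upper violation at `δ` together with a lower one at `δ'` forces `δ' + 1 / P < δ`. So the offsets
with lower violations lie uniformly below those with upper violations, and `τ = τ̄` can be
chosen strictly in between.
-/

open scoped Classical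
open Set

noncomputable section

open Finset

lemma Finset.exists_lt_of_sum_eq_of_lt {ι M : Type*} [Fintype ι] [AddCommMonoid M] [LinearOrder M]
    [IsOrderedCancelAddMonoid M] {f g : ι → M} (h : ∑ i, f i = ∑ i, g i) {k : ι}
    (hk : g k < f k) : ∃ j, f j < g j := by
  by_contra! hle
  exact (Finset.sum_lt_sum (fun i _ => hle i) ⟨k, mem_univ k, hk⟩).ne' h

lemma exists_between_of_add_le {S T : Set ℝ} {g : ℝ} (hg : 0 < g) (hS : S.Nonempty)
    (hT : T.Nonempty) (hST : ∀ s ∈ S, ∀ t ∈ T, s + g ≤ t) :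
    ∃ c, (∀ s ∈ S, s < c) ∧ ∀ t ∈ T, c < t := by
  obtain ⟨t₀, ht₀⟩ := hT
  have hbdd : BddAbove S := ⟨t₀, fun s hs => by linarith [hST s hs t₀ ht₀]⟩
  refine ⟨sSup S + g / 2, fun s hs => by linarith [le_csSup hbdd hs], fun t ht => ?_⟩
  have : sSup S ≤ t - g := csSup_le hS fun s hs => by linarith [hST s hs t ht]
  linarith

lemma Nat.cast_le_div_sub_one_div_of_lt {a b c : ℕ} (hc : 0 < c) (h : (a : ℝ) < b / c) :
    (a : ℝ) ≤ b / c - 1 / c := by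
  have hc' : (0 : ℝ) < c := by exact_mod_cast hc
  rw [lt_div_iff₀ hc'] at h
  have : a * c + 1 ≤ b := by exact_mod_cast h
  rw [← sub_div, le_div_iff₀ hc']
  have : (a : ℝ) * c + 1 ≤ b := by exact_mod_cast this
  linarith

lemma Nat.div_add_one_div_le_cast_of_lt {a b c : ℕ} (hc : 0 < c) (h : (b : ℝ) / c < a) :
    (b : ℝ) / c + 1 / c ≤ a := by
  have hc' : (0 : ℝ) < c := by exact_mod_cast hc
  rw [div_lt_iff₀ hc'] at h
  have : b + 1 ≤ a * c := by exact_mod_cast h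
  rw [← add_div, div_le_iff₀ hc']
  exact_mod_cast this

lemma sub_le_of_mem_roundSet {δ r : ℝ} {x : ℕ} (hx : x ∈ roundSet δ r) : r - δ ≤ x := by
  rcases hx with ⟨h, rfl⟩ | ⟨t, rfl, -, h⟩ | ⟨t, rfl | rfl, rfl⟩ <;> push_cast <;> linarith

lemma le_sub_add_one_of_mem_roundSet {δ r : ℝ} {x : ℕ} (hδ : δ ≤ r + 1)
    (hx : x ∈ roundSet δ r) : (x : ℝ) ≤ r - δ + 1 := by
  rcases hx with ⟨-, rfl⟩ | ⟨t, rfl, h, -⟩ | ⟨t, rfl | rfl, rfl⟩ <;> push_cast <;> linarith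

variable {n : ℕ} {p : Fin n → ℕ} {H : ℕ}

lemma quota_eq_mul (i : Fin n) : quota p H i = H / (∑ j, (p j : ℝ)) * p i := by
  rw [quota, mul_comm, mul_div_right_comm]

lemma sum_quota (hP : (∑ j, (p j : ℝ)) ≠ 0) : ∑ i, quota p H i = H := by
  simp only [quota_eq_mul, ← mul_sum]
  exact div_mul_cancel₀ _ hP

lemma le_quota_sub_of_lt {a : ℕ} {j : Fin n} (hp : 0 < p j) (h : (a : ℝ) < quota p H j) :
    (a : ℝ) ≤ quota p H j - 1 / ∑ i, (p i : ℝ) := by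
  have hP : 0 < ∑ i, p i := hp.trans_le (single_le_sum (by simp) (mem_univ j))
  have key := Nat.cast_le_div_sub_one_div_of_lt (a := a) (b := p j * H) hP
  push_cast at key
  exact key h

lemma quota_add_le_of_lt {a : ℕ} {j : Fin n} (hp : 0 < p j) (h : quota p H j < a) :
    quota p H j + 1 / (∑ i, (p i : ℝ)) ≤ a := by
  have hP : 0 < ∑ i, p i := hp.trans_le (single_le_sum (by simp) (mem_univ j))
  have key := Nat.div_add_one_div_le_cast_of_lt (a := a) (b := p j * H) hP
  push_cast at key
  exact key h

def WithinDivisorBand (p : Fin n → ℕ) (δ lam : ℝ) (x : Fin n → ℕ) : Prop :=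
  ∀ i, (x i : ℝ) ∈ Icc (lam * p i - δ) (lam * p i - δ + 1)

def ViolatesUpperQuota (p : Fin n → ℕ) (H : ℕ) (x : Fin n → ℕ) : Prop :=
  ∃ i, ⌈quota p H i⌉ < (x i : ℤ)

def ViolatesLowerQuota (p : Fin n → ℕ) (H : ℕ) (x : Fin n → ℕ) : Prop :=
  ∃ i, (x i : ℤ) < ⌊quota p H i⌋

variable {δ δ' lam mu : ℝ} {x y : Fin n → ℕ}

lemma exists_withinDivisorBand (hδ : δ ≤ 1) (hx : x ∈ divisorOutput p H δ) :
    ∃ lam, WithinDivisorBand p δ lam x := by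
  obtain ⟨-, lam, hlam, hmem⟩ := hx
  refine ⟨lam, fun i => ⟨sub_le_of_mem_roundSet (hmem i), ?_⟩⟩
  have : 0 ≤ lam * p i := by positivity
  exact le_sub_add_one_of_mem_roundSet (by linarith) (hmem i)

namespace WithinDivisorBand

lemma le_mul_of_ceil_lt (hx : WithinDivisorBand p δ lam x) {k : Fin n}
    (hk : ⌈quota p H k⌉ < (x k : ℤ)) : δ ≤ (lam - H / ∑ j, (p j : ℝ)) * p k := by
  have h := Int.ceil_lt_iff.1 hk
  push_cast at h
  rw [quota_eq_mul] at h
  linarith [(hx k).2]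

lemma le_mul_of_lt_floor (hx : WithinDivisorBand p δ lam x) {m : Fin n}
    (hm : (x m : ℤ) < ⌊quota p H m⌋) : 1 - δ ≤ (H / (∑ j, (p j : ℝ)) - lam) * p m := by
  have h := Int.lt_floor_iff.1 hm
  push_cast at h
  rw [quota_eq_mul] at h
  linarith [(hx m).1]

lemma not_violatesLowerQuota (hx : WithinDivisorBand p δ lam x) (hp : ∀ i, 0 < p i)
    (hδ : δ ∈ Icc (0 : ℝ) 1) (hU : ViolatesUpperQuota p H x) : ¬ViolatesLowerQuota p H x := by
  rintro ⟨m, hm⟩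
  obtain ⟨k, hk⟩ := hU
  have hk' := hx.le_mul_of_ceil_lt hk
  have hm' := hx.le_mul_of_lt_floor hm
  have hpk : (0 : ℝ) < p k := by exact_mod_cast hp k
  have hpm : (0 : ℝ) < p m := by exact_mod_cast hp m
  nlinarith [mul_le_mul_of_nonneg_right hk' hpm.le, mul_le_mul_of_nonneg_right hm' hpk.le,
    mul_nonneg hδ.1 hpm.le, mul_nonneg (sub_nonneg.2 hδ.2) hpk.le]

lemma le_of_sub_lt (hx : WithinDivisorBand p δ lam x) (hy : WithinDivisorBand p δ' mu y)
    (hp : ∀ i, 0 < p i) (hlm : 0 ≤ lam - mu) (h : δ - δ' < lam - mu) : y ≤ x := by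
  intro i
  have hpi : (1 : ℝ) ≤ p i := by exact_mod_cast hp i
  have : (y i : ℝ) < x i + 1 := by
    nlinarith [(hx i).1, (hy i).2, mul_le_mul_of_nonneg_left hpi hlm]
  exact Nat.lt_succ_iff.1 (by exact_mod_cast this)

end WithinDivisorBand

lemma cast_le_sum_cast (p : Fin n → ℕ) (k : Fin n) : (p k : ℝ) ≤ ∑ j, (p j : ℝ) :=
  single_le_sum (fun j _ => Nat.cast_nonneg (p j)) (mem_univ k)

lemma sum_cast_eq_sum_quota (hp : ∀ i, 0 < p i) (k : Fin n) (hx : x ∈ divisorOutput p H δ) :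
    ∑ i, (x i : ℝ) = ∑ i, quota p H i := by
  have hP : (0 : ℝ) < ∑ j, (p j : ℝ) :=
    (Nat.cast_pos.2 (hp k)).trans_le (cast_le_sum_cast p k)
  rw [sum_quota hP.ne']
  exact_mod_cast hx.1

lemma one_div_le_of_violatesUpperQuota (hp : ∀ i, 0 < p i) (hδ : δ ∈ Icc (0 : ℝ) 1)
    (hx : x ∈ divisorOutput p H δ) (hU : ViolatesUpperQuota p H x) :
    1 / ∑ j, (p j : ℝ) ≤ δ := by
  obtain ⟨lam, hb⟩ := exists_withinDivisorBand hδ.2 hx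
  obtain ⟨k, hk⟩ := hU
  have hek := hb.le_mul_of_ceil_lt hk
  have he : 0 ≤ lam - H / ∑ j, (p j : ℝ) :=
    nonneg_of_mul_nonneg_left (hδ.1.trans hek) (by exact_mod_cast hp k)
  have hqk : quota p H k < x k := by
    have := Int.ceil_lt_iff.1 hk
    push_cast at this
    linarith
  obtain ⟨j, hj⟩ := Finset.exists_lt_of_sum_eq_of_lt (sum_cast_eq_sum_quota hp k hx) hqk
  have hxj := le_quota_sub_of_lt (hp j) hj
  rw [quota_eq_mul] at hxj
  nlinarith [(hb j).1, mul_nonneg he (Nat.cast_nonneg (α := ℝ) (p j))]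

lemma le_one_sub_one_div_of_violatesLowerQuota (hp : ∀ i, 0 < p i) (hδ : δ ∈ Icc (0 : ℝ) 1)
    (hx : x ∈ divisorOutput p H δ) (hL : ViolatesLowerQuota p H x) :
    δ ≤ 1 - 1 / ∑ j, (p j : ℝ) := by
  obtain ⟨lam, hb⟩ := exists_withinDivisorBand hδ.2 hx
  obtain ⟨m, hm⟩ := hL
  have hem := hb.le_mul_of_lt_floor hm
  have he : 0 ≤ H / (∑ j, (p j : ℝ)) - lam :=
    nonneg_of_mul_nonneg_left ((sub_nonneg.2 hδ.2).trans hem) (by exact_mod_cast hp m)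
  have hqm : (x m : ℝ) < quota p H m := by
    have := Int.lt_floor_iff.1 hm
    push_cast at this
    linarith
  obtain ⟨j, hj⟩ :=
    Finset.exists_lt_of_sum_eq_of_lt (sum_cast_eq_sum_quota hp m hx).symm hqm
  have hxj := quota_add_le_of_lt (hp j) hj
  rw [quota_eq_mul] at hxj
  nlinarith [(hb j).2, mul_nonneg he (Nat.cast_nonneg (α := ℝ) (p j))]

/-- Otherwise the multipliers differ by more than the offsets, which forces `y ≤ x`, hence
`y = x`, and `x` would violate both quotas. -/
lemma add_one_div_lt_of_violatesUpperQuota_of_violatesLowerQuota (hp : ∀ i, 0 < p i)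
    (hδ : δ ∈ Icc (0 : ℝ) 1) (hδ' : δ' ∈ Icc (0 : ℝ) 1) (hx : x ∈ divisorOutput p H δ)
    (hy : y ∈ divisorOutput p H δ') (hU : ViolatesUpperQuota p H x)
    (hL : ViolatesLowerQuota p H y) : δ' + 1 / ∑ j, (p j : ℝ) < δ := by
  obtain ⟨lam, hbx⟩ := exists_withinDivisorBand hδ.2 hx
  obtain ⟨mu, hby⟩ := exists_withinDivisorBand hδ'.2 hy
  obtain ⟨k, hk⟩ := id hU
  obtain ⟨m, hm⟩ := id hL
  set P := ∑ j, (p j : ℝ)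
  have hP : 1 ≤ P := le_trans (by exact_mod_cast hp k) (cast_le_sum_cast p k)
  have hek := hbx.le_mul_of_ceil_lt hk
  have hem := hby.le_mul_of_lt_floor hm
  have he₁ : 0 ≤ lam - H / P := nonneg_of_mul_nonneg_left (hδ.1.trans hek) (by exact_mod_cast hp k)
  have he₂ : 0 ≤ H / P - mu :=
    nonneg_of_mul_nonneg_left ((sub_nonneg.2 hδ'.2).trans hem) (by exact_mod_cast hp m)
  have hx' : δ ≤ (lam - H / P) * P :=
    hek.trans (mul_le_mul_of_nonneg_left (cast_le_sum_cast p k) he₁)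
  have hy' : 1 - δ' ≤ (H / P - mu) * P :=
    hem.trans (mul_le_mul_of_nonneg_left (cast_le_sum_cast p m) he₂)
  by_contra! hs
  have hsP : (δ - δ') * P ≤ 1 := by
    rw [← le_div_iff₀ (by linarith)]
    linarith
  have hgap : δ - δ' < lam - mu := by
    by_contra! h
    nlinarith [mul_le_mul_of_nonneg_right h (by linarith : (0 : ℝ) ≤ P)]
  have hyx := hbx.le_of_sub_lt hby hp (by linarith) hgap
  have hsum : ∑ i, y i = ∑ i, x i := hy.1.trans hx.1.symm
  obtain rfl : y = x :=
    funext fun i => (sum_eq_sum_iff_of_le fun i _ => hyx i).1 hsum i (mem_univ i)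
  exact hbx.not_violatesLowerQuota hp hδ hU hL

theorem stmt_2_general {n : ℕ} (hn : 1 ≤ n) (p : Fin n → ℕ) (hp : ∀ i, 0 < p i)
    (H : ℕ) :
    ∃ τ τbar : ℝ, τ ∈ Set.Icc (0 : ℝ) 1 ∧ τbar ∈ Set.Icc (0 : ℝ) 1 ∧ τ ≤ τbar ∧
      (∀ δ ∈ Set.Icc (0 : ℝ) τbar, ∀ x ∈ divisorOutput p H δ, ∀ i,
        (x i : ℤ) ≤ ⌈quota p H i⌉) ∧
      (∀ δ ∈ Set.Icc τ (1 : ℝ), ∀ x ∈ divisorOutput p H δ, ∀ i,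
        ⌊quota p H i⌋ ≤ (x i : ℤ)) := by
  have hP : 1 ≤ ∑ j, (p j : ℝ) :=
    le_trans (by exact_mod_cast hp ⟨0, hn⟩) (cast_le_sum_cast p ⟨0, hn⟩)
  obtain ⟨c, hlow, hup⟩ := exists_between_of_add_le (g := 1 / ∑ j, (p j : ℝ)) (by positivity)
    (insert_nonempty 0 {δ | δ ∈ Icc (0 : ℝ) 1 ∧ ∃ y ∈ divisorOutput p H δ, ViolatesLowerQuota p H y})
    (insert_nonempty 1 {δ | δ ∈ Icc (0 : ℝ) 1 ∧ ∃ x ∈ divisorOutput p H δ, ViolatesUpperQuota p H x})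
    (by
      rintro s (rfl | ⟨hs, y, hy, hL⟩) t (rfl | ⟨ht, x, hx, hU⟩)
      · rw [zero_add, div_le_one (by linarith)]
        exact hP
      · simpa using one_div_le_of_violatesUpperQuota hp ht hx hU
      · linarith [le_one_sub_one_div_of_violatesLowerQuota hp hs hy hL]
      · exact (add_one_div_lt_of_violatesUpperQuota_of_violatesLowerQuota hp ht hs hx hy hU hL).le)
  have hc : c ∈ Icc (0 : ℝ) 1 := ⟨(hlow 0 (mem_insert _ _)).le, (hup 1 (mem_insert _ _)).le⟩
  refine ⟨c, c, hc, hc, le_rfl, fun δ hδ x hx i => ?_, fun δ hδ x hx i => ?_⟩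
  · by_contra! h
    exact (hup δ (mem_insert_of_mem _ ⟨⟨hδ.1, hδ.2.trans hc.2⟩, x, hx, i, h⟩)).not_ge hδ.2
  · by_contra! h
    exact (hlow δ (mem_insert_of_mem _ ⟨⟨hc.1.trans hδ.1, hδ.2⟩, x, hx, i, h⟩)).not_ge hδ.1

/-- for every instance there are `τ ≤ τ̄` in `[0,1]` such that upper quota holds
for `δ ∈ [0, τ̄]` and lower quota holds for `δ ∈ [τ, 1]`. -/
theorem stmt_2 {n : ℕ} (hn : 1 ≤ n) (p : Fin n → ℕ) (hp : ∀ i, 0 < p i)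
    (H : ℕ) (hH : 1 ≤ H) :
    ∃ τ τbar : ℝ, τ ∈ Set.Icc (0 : ℝ) 1 ∧ τbar ∈ Set.Icc (0 : ℝ) 1 ∧ τ ≤ τbar ∧
      (∀ δ ∈ Set.Icc (0 : ℝ) τbar, ∀ x ∈ divisorOutput p H δ, ∀ i,
        (x i : ℤ) ≤ ⌈quota p H i⌉) ∧
      (∀ δ ∈ Set.Icc τ (1 : ℝ), ∀ x ∈ divisorOutput p H δ, ∀ i,
        ⌊quota p H i⌋ ≤ (x i : ℤ)) :=
  stmt_2_general hn p hp H
end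
end

section
/- For every apportionment instance (p,H) with n states, the number of pairs (i,t) with i ∈ [n] and t ∈ {0,…,H−1} for which there exists δ ∈ [0,1] with (t+δ)/p_i = λ_H(δ) is at most 2n−1. -/
open scoped Classical
open Set

noncomputable section

/-- `λ_H(δ)`: the minimum `λ` such that at least `H` of the values `(t+δ)/p_i`
(`i ∈ [n]`, `t ∈ {0,…,H−1}`) are at most `λ`. -/
def lambdaH {n : ℕ} (p : Fin n → ℕ) (H : ℕ) (δ : ℝ) : ℝ :=
  sInf {lam : ℝ |
    H ≤ ((Finset.univ ×ˢ Finset.range H).filter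
      (fun it : Fin n × ℕ => ((it.2 : ℝ) + δ) / (p it.1 : ℝ) ≤ lam)).card}

/-!
`λ_H(δ)` is the `H`-th smallest of the values `(t + δ)/p_i`; as each of them increases strictly
with `δ`, so does `λ_H`. Call `(i, t)` low if `(t + 1)/p_i ≤ λ_H(0)`: its line stays strictly below
`λ_H` on `[0, 1]`, so it never meets `λ_H`, and there are at least `H - n` low pairs, since at
least `H` values `t/p_i` are at most `λ_H(0)` and only `n` of them have `t = 0`. For a pair
`(i, t)` with `t ≥ 1` that is low or meets `λ_H`, one gets `t/p_i < λ_H(1)`, so `(i, t - 1)` is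
among the fewer than `H` pairs whose value at `δ = 1` lies strictly below `λ_H(1)`. Hence the
meeting and the low pairs together number at most `n + H - 1`, and the meeting ones at most
`2n - 1`.
-/

open Finset

section OrderStatistic

variable {α : Type*} (s : Finset α) (f : α → ℝ) (k : ℕ)

/-- For `0 < k ≤ #s`, the `k`-th smallest value of `f` on `s`, counted with multiplicity. -/
def orderStat : ℝ :=
  sInf {x : ℝ | k ≤ (s.filter (fun a => f a ≤ x)).card}

lemma setOf_le_card_filter_eq_biUnion :
    {x : ℝ | k ≤ (s.filter (fun a => f a ≤ x)).card} =
      ⋃ t ∈ s.powersetCard k, ⋂ a ∈ t, Ici (f a) := by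
  ext x
  simp only [Set.mem_ofPred_eq, mem_iUnion, mem_iInter, Set.mem_Ici, mem_powersetCard, exists_prop]
  constructor
  · intro hx
    obtain ⟨t, hts, rfl⟩ := exists_subset_card_eq hx
    exact ⟨t, ⟨hts.trans (filter_subset _ _), rfl⟩, fun a ha => (mem_filter.mp (hts ha)).2⟩
  · rintro ⟨t, ⟨hts, rfl⟩, ht⟩
    exact card_le_card fun a ha => mem_filter.mpr ⟨hts ha, ht a ha⟩

lemma isClosed_setOf_le_card_filter :
    IsClosed {x : ℝ | k ≤ (s.filter (fun a => f a ≤ x)).card} := by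
  rw [setOf_le_card_filter_eq_biUnion]
  exact isClosed_biUnion_finset fun t _ => isClosed_biInter fun a _ => isClosed_Ici

variable {k}

lemma bddBelow_setOf_le_card_filter (hk : 0 < k) :
    BddBelow {x : ℝ | k ≤ (s.filter (fun a => f a ≤ x)).card} := by
  obtain ⟨b, hb⟩ := (s.image f).bddBelow
  refine ⟨b, fun x hx => ?_⟩
  obtain ⟨a, ha⟩ := card_pos.mp (hk.trans_le hx)
  obtain ⟨has, hax⟩ := mem_filter.mp ha
  exact (hb (mem_coe.mpr (mem_image_of_mem f has))).trans hax

lemma le_card_filter_le_orderStat (hk : 0 < k) (hks : k ≤ s.card) :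
    k ≤ (s.filter (fun a => f a ≤ orderStat s f k)).card := by
  obtain ⟨b, hb⟩ := (s.image f).bddAbove
  have hb_mem : b ∈ {x : ℝ | k ≤ (s.filter (fun a => f a ≤ x)).card} := by
    rwa [Set.mem_ofPred_eq,
      filter_true_of_mem fun a ha => hb (mem_coe.mpr (mem_image_of_mem f ha))]
  exact (isClosed_setOf_le_card_filter s f k).csInf_mem ⟨b, hb_mem⟩
    (bddBelow_setOf_le_card_filter s f hk)

lemma card_filter_lt_orderStat_lt (hk : 0 < k) :
    (s.filter (fun a => f a < orderStat s f k)).card < k := by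
  by_contra! h
  obtain ⟨a, ha, hmax⟩ := exists_max_image _ f (card_pos.mp (hk.trans_le h))
  have : orderStat s f k ≤ f a :=
    csInf_le (bddBelow_setOf_le_card_filter s f hk) <| h.trans <| card_le_card
      fun b hb => mem_filter.mpr ⟨(mem_filter.mp hb).1, hmax b hb⟩
  exact (mem_filter.mp ha).2.not_ge this

lemma orderStat_lt_orderStat {g : α → ℝ} (hfg : ∀ a ∈ s, f a < g a) (hk : 0 < k)
    (hks : k ≤ s.card) : orderStat s f k < orderStat s g k := by
  by_contra! h
  refine (card_filter_lt_orderStat_lt s f hk).not_ge <|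
    (le_card_filter_le_orderStat s g hk hks).trans <| card_le_card fun a ha => ?_
  obtain ⟨has, hag⟩ := mem_filter.mp ha
  exact mem_filter.mpr ⟨has, (hfg a has).trans_le (hag.trans h)⟩

end OrderStatistic

lemma lt_of_eq_of_mem_Icc {f g : ℝ → ℝ} (hf : StrictMono f) (hg : StrictMono g) {δ : ℝ}
    (hδ : δ ∈ Icc (0 : ℝ) 1) (h : f δ = g δ) : f 0 < g 1 := by
  rcases hδ.2.lt_or_eq with hδ1 | rfl
  · exact (hf.monotone hδ.1).trans_lt (h ▸ hg hδ1)
  · exact h ▸ hf zero_lt_one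

lemma card_le_add_card_of_succ_mem {n : ℕ} {S R : Finset (Fin n × ℕ)}
    (h : ∀ i t, (i, t + 1) ∈ S → (i, t) ∈ R) : S.card ≤ n + R.card := by
  have hS : S ⊆ Finset.univ ×ˢ {0} ∪ R.image fun it => (it.1, it.2 + 1) := by
    rintro ⟨i, _ | t⟩ hit
    · simp
    · exact mem_union_right _ (mem_image_of_mem _ (h i t hit))
  calc S.card ≤ (Finset.univ ×ˢ {0} ∪ R.image fun it => (it.1, it.2 + 1)).card :=
        card_le_card hS
    _ ≤ n + R.card := by
      refine (Finset.card_union_le _ _).trans (add_le_add ?_ card_image_le)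
      simp

section Apportionment

variable {n : ℕ} (p : Fin n → ℕ) (H : ℕ)

def seatLine (it : Fin n × ℕ) (δ : ℝ) : ℝ := ((it.2 : ℝ) + δ) / p it.1

lemma seatLine_succ_zero (i : Fin n) (t : ℕ) :
    seatLine p (i, t + 1) 0 = seatLine p (i, t) 1 := by
  simp [seatLine]

lemma seatLine_strictMono (hp : ∀ i, 0 < p i) (it : Fin n × ℕ) : StrictMono (seatLine p it) :=
  fun _ _ h => div_lt_div_of_pos_right (by linarith) (by exact_mod_cast hp it.1)

lemma lambdaH_eq_orderStat (δ : ℝ) :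
    lambdaH p H δ = orderStat (Finset.univ ×ˢ Finset.range H) (seatLine p · δ) H := rfl

lemma le_card_univ_product_range (hn : 1 ≤ n) :
    H ≤ (Finset.univ ×ˢ Finset.range H : Finset (Fin n × ℕ)).card := by
  simpa using Nat.le_mul_of_pos_left H hn

lemma lambdaH_strictMono (hn : 1 ≤ n) (hp : ∀ i, 0 < p i) (hH : 1 ≤ H) :
    StrictMono (lambdaH p H) := fun _ _ h =>
  orderStat_lt_orderStat _ _ (fun it _ => seatLine_strictMono p hp it h) hH
    (le_card_univ_product_range H hn)

end Apportionment

/-- at most `2n−1` of the lines `δ ↦ (t+δ)/p_i` intersect `λ_H` on `[0,1]`. -/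
theorem stmt_5 {n : ℕ} (hn : 1 ≤ n) (p : Fin n → ℕ) (hp : ∀ i, 0 < p i)
    (H : ℕ) (hH : 1 ≤ H) :
    ((Finset.univ ×ˢ Finset.range H).filter
        (fun it : Fin n × ℕ => ∃ δ ∈ Set.Icc (0 : ℝ) 1,
          ((it.2 : ℝ) + δ) / (p it.1 : ℝ) = lambdaH p H δ)).card ≤ 2 * n - 1 := by
  have hline := seatLine_strictMono p hp
  have hlam := lambdaH_strictMono p H hn hp hH
  set D : Finset (Fin n × ℕ) := Finset.univ ×ˢ Finset.range H
  set E := D.filter fun it => seatLine p it 1 < lambdaH p H 1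
  set G := D.filter fun it => seatLine p it 0 ≤ lambdaH p H 0
  set B := D.filter fun it => seatLine p it 1 ≤ lambdaH p H 0
  have hE : E.card < H := card_filter_lt_orderStat_lt D (seatLine p · 1) hH
  have hG : H ≤ G.card :=
    le_card_filter_le_orderStat D (seatLine p · 0) hH (le_card_univ_product_range H hn)
  have hGB : G.card ≤ n + B.card := card_le_add_card_of_succ_mem fun i t hit => by
    simp only [G, B, D, mem_filter, mem_product, Finset.mem_range, seatLine_succ_zero] at hit ⊢
    exact ⟨⟨hit.1.1, by omega⟩, hit.2⟩
  set T := D.filter fun it => ∃ δ ∈ Icc (0 : ℝ) 1, seatLine p it δ = lambdaH p H δ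
  have hTB : Disjoint T B := disjoint_filter.mpr fun it _ ⟨δ, hδ, hit⟩ hB =>
    hB.not_gt (lt_of_eq_of_mem_Icc hlam (hline it) hδ hit.symm)
  have hTBE : (T ∪ B).card ≤ n + E.card := card_le_add_card_of_succ_mem fun i t hit => by
    have hD : (i, t + 1) ∈ D := union_subset (filter_subset _ _) (filter_subset _ _) hit
    simp only [T, B, E, D, Finset.mem_union, mem_filter, mem_product, Finset.mem_range]
      at hit hD ⊢
    refine ⟨⟨hD.1, by omega⟩, ?_⟩
    rw [← seatLine_succ_zero]
    rcases hit with ⟨-, δ, hδ, hit⟩ | ⟨-, hit⟩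
    · exact lt_of_eq_of_mem_Icc (hline _) hlam hδ hit
    · exact (hline _ zero_lt_one).trans_le (hit.trans_lt (hlam zero_lt_one)).le
  rw [card_union_of_disjoint hTB] at hTBE
  change T.card ≤ 2 * n - 1
  omega
end
end

section
/- Let ℓ_i(δ) = m_i·δ + c_i, i ∈ [n], be an arrangement of n distinct lines in general position (no three lines pass through a common point) with rational slopes m_i. Then there exists an arrangement ℓ'_i(δ) = m'_i·δ + c'_i, i ∈ [n], such that: (i) m'_i ∈ (1,2) for every i; (ii) c'_i/m'_i is a natural number for every i; and (iii) for every k ∈ {0,…,n−1}, the number of vertices of the k-level of the arrangement {ℓ_i} equals the number of vertices of the k-level of the arrangement {ℓ'_i}. -/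
/-!
In general position, a crossing of two lines `ℓ_i`, `ℓ_j` is a vertex of the `k`-level exactly
when `k` or `k - 1` lines pass strictly below it; near any other point the level follows a single
line. Hence the number of vertices of the `k`-level is the number of crossing pairs of depth `k`
or `k - 1`, and the depth of the crossing of `ℓ_i` and `ℓ_j` only depends on the signs of the
offsets `ℓ_l - ℓ_i` there.

These signs do not change under `m ↦ a m + 3/2`, `c ↦ L c + β` with `a, L > 0`; a small `a` puts
the slopes in `(1, 2)`. Rounding each intercept up to a multiple of its slope then moves it by
less than `2`, which changes the offsets by a bounded amount, so for `L` large their signs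
survive the rounding.
-/

open scoped Classical
open Set

noncomputable section

/-- The `k`-level of the arrangement of the `m` affine functions `δ ↦ a i * δ + b i`:
the `(k+1)`-st smallest of the values at `δ`. -/
def levelFun {m : ℕ} (a b : Fin m → ℝ) (k : ℕ) (δ : ℝ) : ℝ :=
  sInf {y : ℝ | k + 1 ≤ (Finset.univ.filter (fun i : Fin m => a i * δ + b i ≤ y)).card}

/-- A vertex of the `k`-level: a point where the level does not coincide with a single
affine function on any open neighborhood. -/
def IsVertex {m : ℕ} (a b : Fin m → ℝ) (k : ℕ) (δ : ℝ) : Prop :=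
  ¬ ∃ (α β ε : ℝ), 0 < ε ∧ ∀ x ∈ Set.Ioo (δ - ε) (δ + ε), levelFun a b k x = α * x + β

open Filter Topology Finset

section Rank

variable {ι : Type*} [Fintype ι] (f : ι → ℝ) {k : ℕ} {y : ℝ}

lemma card_lt_add_one_le_card_le (i : ι) : #{l | f l < f i} + 1 ≤ #{l | f l ≤ f i} := by
  rw [← card_insert_of_notMem (s := {l | f l < f i}) (a := i) (by simp)]
  exact card_le_card fun l hl => by
    rcases mem_insert.1 hl with rfl | hl
    · simp
    · simpa using (mem_filter.1 hl).2.le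

lemma exists_card_lt_le_lt_card_le (hk : k < Fintype.card ι) :
    ∃ y, #{i | f i < y} ≤ k ∧ k < #{i | f i ≤ y} := by
  obtain ⟨σ, hσ⟩ : ∃ σ : Fin (Fintype.card ι) ≃ ι, Monotone (f ∘ σ) :=
    ⟨(Tuple.sort (f ∘ (Fintype.equivFin ι).symm)).trans (Fintype.equivFin ι).symm,
      fun _ _ h => Tuple.monotone_sort (f ∘ (Fintype.equivFin ι).symm) h⟩
  set r : Fin (Fintype.card ι) := ⟨k, hk⟩
  refine ⟨f (σ r), ?_, ?_⟩
  · calc #{i | f i < f (σ r)} = #{s | f (σ s) < f (σ r)} := card_equiv σ.symm (by simp)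
      _ ≤ #(Iio r) := card_le_card fun s hs => by simpa using hσ.reflect_lt (mem_filter.1 hs).2
      _ = k := Fin.card_Iio r
  · calc k < #(Iic r) := by simp [r]
      _ ≤ #{s | f (σ s) ≤ f (σ r)} := card_le_card fun s hs => by simpa using hσ (mem_Iic.1 hs)
      _ = #{i | f i ≤ f (σ r)} := card_equiv σ (by simp)

lemma sInf_card_le_eq (h₁ : #{i | f i < y} ≤ k) (h₂ : k < #{i | f i ≤ y}) :
    sInf {y | k + 1 ≤ #{i | f i ≤ y}} = y := by
  rw [← csInf_Ici (a := y)]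
  congr 1
  ext y'
  simp only [Set.mem_ofPred_eq, Set.mem_Ici]
  refine ⟨fun h => not_lt.1 fun hy' => ?_, fun h => h₂.trans_le (card_le_card ?_)⟩
  · have : #{i | f i ≤ y'} ≤ #{i | f i < y} :=
      card_le_card fun i hi => by simpa using ((mem_filter.1 hi).2.trans_lt hy')
    omega
  · exact fun i hi => by simpa using (mem_filter.1 hi).2.trans h

lemma sInf_card_le_eq_iff (hk : k < Fintype.card ι) :
    sInf {y | k + 1 ≤ #{i | f i ≤ y}} = y ↔ #{i | f i < y} ≤ k ∧ k < #{i | f i ≤ y} := by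
  refine ⟨?_, fun h => sInf_card_le_eq f h.1 h.2⟩
  obtain ⟨y₀, h₀⟩ := exists_card_lt_le_lt_card_le f hk
  rintro rfl
  rwa [sInf_card_le_eq f h₀.1 h₀.2]

end Rank

lemma levelFun_eq_iff {n k : ℕ} (M C : Fin n → ℝ) (hk : k < n) {x y : ℝ} :
    levelFun M C k x = y ↔
      #{i | M i * x + C i < y} ≤ k ∧ k < #{i | M i * x + C i ≤ y} :=
  sInf_card_le_eq_iff (fun i => M i * x + C i) (by simpa using hk)

section Persistence

lemma eventually_forall_lt_of_lt {X ι : Type*} [TopologicalSpace X] [Finite ι]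
    {f : ι → X → ℝ} (hf : ∀ i, Continuous (f i)) (x₀ : X) :
    ∀ᶠ x in 𝓝 x₀, ∀ i j, f i x₀ < f j x₀ → f i x < f j x :=
  eventually_all.2 fun i => eventually_all.2 fun j => eventually_imp_distrib_left.2 fun h =>
    (hf i).continuousAt.eventually_lt (hf j).continuousAt h

variable {ι : Type*} [Fintype ι] {f g : ι → ℝ} (hfg : ∀ i j, f i < f j → g i < g j)
include hfg

lemma card_lt_le_card_lt_of_lt_imp (i : ι) : #{l | f l < f i} ≤ #{l | g l < g i} :=
  card_le_card fun l hl => by simpa using hfg l i (mem_filter.1 hl).2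

lemma card_le_le_card_le_of_lt_imp (i : ι) : #{l | g l ≤ g i} ≤ #{l | f l ≤ f i} :=
  card_le_card fun l hl => by
    simpa using fun h => (mem_filter.1 hl).2.not_gt (hfg i l h)

end Persistence

lemma eq_of_eventually_affine_eq {l : Filter ℝ} [l.NeBot] {x₀ α β a b : ℝ}
    (hne : ∀ᶠ x in l, x ≠ x₀) (h : ∀ᶠ x in l, α * x + β = a * x + b)
    (h₀ : α * x₀ + β = a * x₀ + b) : α = a := by
  obtain ⟨x, hx, hxx₀⟩ := (h.and hne).exists
  have : (α - a) * (x - x₀) = 0 := by linear_combination hx - h₀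
  simpa [sub_eq_zero, hxx₀] using this

lemma not_eventually_affine_of_kink {F : ℝ → ℝ} {x₀ a b a' b' : ℝ} (hne : a ≠ a')
    (hr : ∀ᶠ x in 𝓝[>] x₀, F x = a * x + b) (hl : ∀ᶠ x in 𝓝[<] x₀, F x = a' * x + b')
    (h₀ : F x₀ = a * x₀ + b) (h₀' : F x₀ = a' * x₀ + b') :
    ¬ ∃ α β, ∀ᶠ x in 𝓝 x₀, F x = α * x + β := by
  rintro ⟨α, β, h⟩
  have slope {l : Filter ℝ} [l.NeBot] (hl₀ : l ≤ 𝓝[≠] x₀) {c d : ℝ}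
      (hc : ∀ᶠ x in l, F x = c * x + d) (hc₀ : F x₀ = c * x₀ + d) : α = c :=
    eq_of_eventually_affine_eq (hl₀ self_mem_nhdsWithin)
      ((h.filter_mono (hl₀.trans nhdsWithin_le_nhds)).and hc |>.mono fun x hx => hx.1 ▸ hx.2)
      (h.self_of_nhds ▸ hc₀)
  exact hne ((slope (l := 𝓝[>] x₀) (nhdsWithin_mono _ fun _ hx => ne_of_gt hx) hr h₀).symm.trans
    (slope (l := 𝓝[<] x₀) (nhdsWithin_mono _ fun _ hx => ne_of_lt hx) hl h₀'))

lemma isVertex_iff_not_eventually {n : ℕ} (M C : Fin n → ℝ) (k : ℕ) (δ : ℝ) :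
    IsVertex M C k δ ↔ ¬ ∃ α β, ∀ᶠ x in 𝓝 δ, levelFun M C k x = α * x + β := by
  simp only [IsVertex, Metric.nhds_basis_ball.eventually_iff, Real.ball_eq_Ioo]

lemma mul_add_neg_iff_of_abs_lt {L u w : ℝ} (h : |w| < L * |u|) :
    L * u + w < 0 ↔ u < 0 := by
  rcases lt_trichotomy u 0 with hu | rfl | hu
  · rw [abs_of_neg hu] at h
    simp only [hu, iff_true]
    linarith [le_abs_self w]
  · simp at h; linarith [abs_nonneg w]
  · rw [abs_of_pos hu] at h
    simp only [hu.not_gt, iff_false, not_lt]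
    nlinarith [neg_abs_le w]

lemma mul_add_ne_zero_of_abs_lt {L u w : ℝ} (h : |w| < L * |u|) : L * u + w ≠ 0 := by
  intro h0
  rw [eq_neg_of_add_eq_zero_right h0, abs_neg, abs_mul] at h
  exact h.not_ge (mul_le_mul_of_nonneg_right (le_abs_self L) (abs_nonneg u))

lemma eventually_forall_lt_mul_abs {τ : Type*} [Finite τ] (K u : τ → ℝ) :
    ∀ᶠ L in atTop, ∀ t, u t ≠ 0 → K t < L * |u t| :=
  eventually_all.2 fun t => eventually_imp_distrib_left.2 fun hu =>
    (tendsto_id.atTop_mul_const (abs_pos.2 hu)).eventually_gt_atTop (K t)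

namespace LineArrangement

variable {n : ℕ} {M C : Fin n → ℝ} {k : ℕ} {i j l : Fin n} {δ₀ x : ℝ}

def InGeneralPosition (M C : Fin n → ℝ) : Prop :=
  (∀ i j, i ≠ j → (M i, C i) ≠ (M j, C j)) ∧
  ∀ i j l, i ≠ j → j ≠ l → i ≠ l →
    ¬ ∃ δ, M i * δ + C i = M j * δ + C j ∧ M j * δ + C j = M l * δ + C l

lemma InGeneralPosition.slope_ne (h : InGeneralPosition M C) (hij : i ≠ j)
    (hδ : M i * δ₀ + C i = M j * δ₀ + C j) : M i ≠ M j := fun hM =>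
  h.1 i j hij (Prod.ext hM (by rw [hM] at hδ; linarith))

lemma InGeneralPosition.eq_or_eq (h : InGeneralPosition M C) (hij : i ≠ j)
    (hji : M j * δ₀ + C j = M i * δ₀ + C i) (hl : M l * δ₀ + C l = M i * δ₀ + C i) :
    l = i ∨ l = j := by
  by_contra! hl'
  exact h.2 i j l hij (Ne.symm hl'.2) (Ne.symm hl'.1) ⟨δ₀, hji.symm, hji.trans hl.symm⟩

lemma exists_eq_levelFun (M C : Fin n → ℝ) (hk : k < n) (x : ℝ) :
    ∃ i, M i * x + C i = levelFun M C k x := by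
  obtain ⟨hlt, hle⟩ := (levelFun_eq_iff M C hk).1 rfl
  by_contra! h
  refine hle.not_ge (hlt.trans' (Finset.card_le_card fun i hi => ?_))
  simpa using lt_of_le_of_ne (mem_filter.1 hi).2 (h i)

lemma eventually_levelFun_eq_of_unique (hk : k < n)
    (hi : levelFun M C k δ₀ = M i * δ₀ + C i)
    (huniq : ∀ l, l ≠ i → M l * δ₀ + C l ≠ M i * δ₀ + C i) :
    ∀ᶠ x in 𝓝 δ₀, levelFun M C k x = M i * x + C i := by
  filter_upwards [eventually_forall_lt_of_lt (f := fun l x => M l * x + C l)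
    (fun _ => by fun_prop) δ₀] with x hx
  have h₁ := card_lt_le_card_lt_of_lt_imp hx i
  have h₂ := card_le_le_card_le_of_lt_imp hx i
  have h₃ := card_lt_add_one_le_card_le (fun l => M l * x + C l) i
  have h₄ : #{l | M l * δ₀ + C l ≤ M i * δ₀ + C i} ≤
      #(insert i ({l | M l * δ₀ + C l < M i * δ₀ + C i} : Finset (Fin n))) :=
    Finset.card_le_card fun l hl => by
      by_cases hli : l = i
      · simp [hli]
      · simpa [hli] using lt_of_le_of_ne (mem_filter.1 hl).2 (huniq l hli)
  grw [card_insert_le] at h₄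
  rw [levelFun_eq_iff M C hk] at hi ⊢
  omega

lemma levelFun_eq_of_crossing (hk : k < n) (hij : i ≠ j)
    (hlev : levelFun M C k δ₀ = M i * δ₀ + C i) (hji : M j * δ₀ + C j = M i * δ₀ + C i)
    (hothers : ∀ l, M l * δ₀ + C l = M i * δ₀ + C i → l = i ∨ l = j)
    (hx : ∀ a b, M a * δ₀ + C a < M b * δ₀ + C b → M a * x + C a < M b * x + C b)
    (hlt : M i * x + C i < M j * x + C j) :
    levelFun M C k x =
      if #{l | M l * δ₀ + C l < M i * δ₀ + C i} = k then M i * x + C i else M j * x + C j := by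
  rw [levelFun_eq_iff M C hk] at hlev
  set B : Finset (Fin n) := {l | M l * δ₀ + C l < M i * δ₀ + C i} with hB
  have hiB : i ∉ B := by simp [B]
  have hjB : j ∉ B := by simp [B, hji]
  have hat : #{l | M l * δ₀ + C l ≤ M i * δ₀ + C i} ≤ #(insert i (insert j B)) :=
    Finset.card_le_card fun l hl => by
      rcases (mem_filter.1 hl).2.lt_or_eq with h | h
      · simp [B, h]
      · rcases hothers l h with rfl | rfl <;> simp
  grw [card_insert_le, card_insert_le] at hat
  have hi_le : #{l | M l * x + C l ≤ M i * x + C i} ≤ #(insert i B) :=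
    Finset.card_le_card fun l hl => by
      have hl := (mem_filter.1 hl).2
      rcases lt_trichotomy (M l * δ₀ + C l) (M i * δ₀ + C i) with h | h | h
      · simp [B, h]
      · rcases hothers l h with rfl | rfl
        · simp
        · exact absurd hl hlt.not_ge
      · exact absurd hl (hx i l h).not_ge
  grw [card_insert_le] at hi_le
  have hj_lt : #B + 1 ≤ #{l | M l * x + C l < M j * x + C j} := by
    rw [← card_insert_of_notMem hiB]
    exact Finset.card_le_card fun l hl => by
      rcases mem_insert.1 hl with rfl | hl
      · simpa using hlt
      · simpa using hx l j (hji ▸ (mem_filter.1 hl).2)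
  have hi_lt := card_lt_le_card_lt_of_lt_imp hx i
  have hj_le := card_le_le_card_le_of_lt_imp hx j
  have hi := card_lt_add_one_le_card_le (fun l => M l * x + C l) i
  have hj := card_lt_add_one_le_card_le (fun l => M l * x + C l) j
  simp only [hji, ← hB] at hi_lt hj_le hi hj
  split_ifs <;> rw [levelFun_eq_iff M C hk] <;> omega

lemma InGeneralPosition.not_eventually_levelFun_eq_affine (h : InGeneralPosition M C)
    (hk : k < n) (hij : i ≠ j) (hi : M i * δ₀ + C i = levelFun M C k δ₀)
    (hj : M j * δ₀ + C j = levelFun M C k δ₀) :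
    ¬ ∃ α β, ∀ᶠ x in 𝓝 δ₀, levelFun M C k x = α * x + β := by
  wlog hM : M i < M j generalizing i j
  · exact this hij.symm hj hi ((h.slope_ne hij (hi.trans hj.symm)).symm.lt_of_le (not_lt.1 hM))
  have hji : M j * δ₀ + C j = M i * δ₀ + C i := hj.trans hi.symm
  have hgap (x : ℝ) : M j * x + C j - (M i * x + C i) = (M j - M i) * (x - δ₀) := by
    linear_combination hji
  have hx := eventually_forall_lt_of_lt (f := fun l x => M l * x + C l) (fun _ => by fun_prop) δ₀
  have right : ∀ᶠ x in 𝓝[>] δ₀, levelFun M C k x =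
      if #{l | M l * δ₀ + C l < M i * δ₀ + C i} = k then M i * x + C i else M j * x + C j :=
    ((hx.filter_mono nhdsWithin_le_nhds).and self_mem_nhdsWithin).mono fun x hx =>
      levelFun_eq_of_crossing hk hij hi.symm hji (fun _ hl => h.eq_or_eq hij hji hl) hx.1
        (by linarith [hgap x, mul_pos (sub_pos.2 hM) (sub_pos.2 hx.2)])
  have left : ∀ᶠ x in 𝓝[<] δ₀, levelFun M C k x =
      if #{l | M l * δ₀ + C l < M i * δ₀ + C i} = k then M j * x + C j else M i * x + C i :=
    ((hx.filter_mono nhdsWithin_le_nhds).and self_mem_nhdsWithin).mono fun x hx => by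
      rw [levelFun_eq_of_crossing hk hij.symm hj.symm hji.symm
        (fun _ hl => (h.eq_or_eq hij hji (hl.trans hji)).symm) hx.1
        (by linarith [hgap x, mul_neg_of_pos_of_neg (sub_pos.2 hM) (sub_neg.2 hx.2)]), hji]
  split_ifs at right left
  · exact not_eventually_affine_of_kink hM.ne right left hi.symm hj.symm
  · exact not_eventually_affine_of_kink hM.ne' right left hj.symm hi.symm

theorem InGeneralPosition.isVertex_iff (h : InGeneralPosition M C) (hk : k < n) :
    IsVertex M C k δ₀ ↔ ∃ i j, i ≠ j ∧ M i * δ₀ + C i = levelFun M C k δ₀ ∧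
      M j * δ₀ + C j = levelFun M C k δ₀ := by
  refine ⟨fun hv => ?_, fun ⟨i, j, hij, hi, hj⟩ =>
    (isVertex_iff_not_eventually M C k δ₀).2 (h.not_eventually_levelFun_eq_affine hk hij hi hj)⟩
  by_contra! hno
  obtain ⟨i, hi⟩ := exists_eq_levelFun M C hk δ₀
  exact (isVertex_iff_not_eventually M C k δ₀).1 hv ⟨M i, C i,
    eventually_levelFun_eq_of_unique hk hi.symm fun l hl heq => hno l i hl (heq.trans hi) hi⟩

def crossing (M C : Fin n → ℝ) (i j : Fin n) : ℝ := (C j - C i) / (M i - M j)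

def crossOffset (M C : Fin n → ℝ) (i j l : Fin n) : ℝ :=
  M l * crossing M C i j + C l - (M i * crossing M C i j + C i)

def depth (M C : Fin n → ℝ) (i j : Fin n) : ℕ := #{l | crossOffset M C i j l < 0}

def levelPairs (M C : Fin n → ℝ) (k : ℕ) : Finset (Fin n × Fin n) :=
  {p | p.1 < p.2 ∧ M p.1 ≠ M p.2 ∧ (depth M C p.1 p.2 = k ∨ depth M C p.1 p.2 + 1 = k)}

lemma crossing_comm (M C : Fin n → ℝ) (i j : Fin n) : crossing M C j i = crossing M C i j := by
  rw [crossing, crossing, ← neg_sub (C j), ← neg_sub (M i), neg_div_neg_eq]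

lemma line_crossing (hM : M i ≠ M j) :
    M i * crossing M C i j + C i = M j * crossing M C i j + C j := by
  have := sub_ne_zero.2 hM
  rw [crossing]
  field_simp
  ring

lemma eq_crossing (hM : M i ≠ M j) (hδ : M i * δ₀ + C i = M j * δ₀ + C j) :
    δ₀ = crossing M C i j := by
  have := sub_ne_zero.2 hM
  rw [crossing, eq_div_iff this]
  linarith

lemma crossOffset_eq (M C : Fin n → ℝ) (i j l : Fin n) :
    crossOffset M C i j l = (M l - M i) * ((C j - C i) / (M i - M j)) + (C l - C i) := by
  rw [crossOffset, crossing]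
  ring

lemma crossOffset_left (M C : Fin n → ℝ) (i j : Fin n) : crossOffset M C i j i = 0 := sub_self _

lemma crossOffset_right (hM : M i ≠ M j) : crossOffset M C i j j = 0 := by
  rw [crossOffset, line_crossing hM, sub_self]

lemma depth_eq_card (M C : Fin n → ℝ) (i j : Fin n) :
    depth M C i j = #{l | M l * crossing M C i j + C l < M i * crossing M C i j + C i} := by
  simp only [depth, crossOffset, sub_neg]

lemma inGeneralPosition_iff :
    InGeneralPosition M C ↔ (∀ i j, i ≠ j → M i = M j → C i ≠ C j) ∧
      ∀ i j l, M i ≠ M j → l ≠ i → l ≠ j → crossOffset M C i j l ≠ 0 := by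
  constructor
  · refine fun h => ⟨fun i j hij hM hC => h.1 i j hij (Prod.ext hM hC),
      fun i j l hM hli hlj h0 => hli ?_⟩
    rw [crossOffset, sub_eq_zero] at h0
    exact (h.eq_or_eq (fun hij => hM (congrArg M hij)) (line_crossing hM).symm h0).resolve_right hlj
  · rintro ⟨hpar, hoff⟩
    refine ⟨fun i j hij hp => hpar i j hij (congrArg Prod.fst hp) (congrArg Prod.snd hp), ?_⟩
    rintro i j l hij hjl hil ⟨δ, hδij, hδjl⟩
    by_cases hM : M i = M j
    · exact hpar i j hij hM (by rw [hM] at hδij; linarith)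
    · refine hoff i j l hM (Ne.symm hil) (Ne.symm hjl) ?_
      rw [crossOffset, ← eq_crossing hM hδij, ← hδjl, hδij, sub_self]

lemma InGeneralPosition.levelFun_crossing_eq_iff (h : InGeneralPosition M C) (hk : k < n)
    (hij : i ≠ j) (hM : M i ≠ M j) :
    levelFun M C k (crossing M C i j) = M i * crossing M C i j + C i ↔
      depth M C i j = k ∨ depth M C i j + 1 = k := by
  rw [depth_eq_card]
  set δ := crossing M C i j
  have hji : M j * δ + C j = M i * δ + C i := (line_crossing hM).symm
  have hle : (({l | M l * δ + C l ≤ M i * δ + C i} : Finset (Fin n))) =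
      insert i (insert j ({l | M l * δ + C l < M i * δ + C i} : Finset (Fin n))) := by
    ext l
    simp only [mem_filter, Finset.mem_univ, true_and, Finset.mem_insert]
    refine ⟨fun hl => ?_, by rintro (rfl | rfl | hl) <;> [exact le_rfl; exact hji.le; exact hl.le]⟩
    rcases hl.lt_or_eq with hl | hl
    · exact Or.inr (Or.inr hl)
    · rcases h.eq_or_eq hij hji hl with rfl | rfl <;> simp
  rw [levelFun_eq_iff M C hk, hle, card_insert_of_notMem (by simp [hij]),
    card_insert_of_notMem (by simp [hji])]
  omega

theorem InGeneralPosition.vertexSet_eq (h : InGeneralPosition M C) (hk : k < n) :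
    {δ | IsVertex M C k δ} =
      (fun p : Fin n × Fin n => crossing M C p.1 p.2) '' levelPairs M C k := by
  ext δ
  simp only [Set.mem_ofPred_eq, h.isVertex_iff hk, levelPairs, coe_filter, Finset.mem_univ,
    true_and, Set.mem_image, Prod.exists]
  constructor
  · rintro ⟨i, j, hij, hi, hj⟩
    have hM := h.slope_ne hij (hi.trans hj.symm)
    have hδ := eq_crossing hM (hi.trans hj.symm)
    rcases hij.lt_or_gt with hlt | hlt
    · exact ⟨i, j, ⟨hlt, hM, (h.levelFun_crossing_eq_iff hk hij hM).1 (hδ ▸ hi.symm)⟩, hδ.symm⟩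
    · rw [← crossing_comm] at hδ
      exact ⟨j, i, ⟨hlt, hM.symm, (h.levelFun_crossing_eq_iff hk hij.symm hM.symm).1
        (hδ ▸ hj.symm)⟩, hδ.symm⟩
  · rintro ⟨i, j, ⟨hlt, hM, hd⟩, rfl⟩
    have hi := (h.levelFun_crossing_eq_iff hk hlt.ne hM).2 hd
    exact ⟨i, j, hlt.ne, hi.symm, (line_crossing hM).symm.trans hi.symm⟩

lemma InGeneralPosition.injOn_crossing (h : InGeneralPosition M C) (hk : k < n) :
    Set.InjOn (fun p : Fin n × Fin n => crossing M C p.1 p.2) (levelPairs M C k) := by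
  rintro ⟨i, j⟩ hp ⟨i', j'⟩ hq (hδ : crossing M C i j = crossing M C i' j')
  simp only [levelPairs, coe_filter, Finset.mem_univ, true_and, Set.mem_ofPred_eq] at hp hq
  have hi := (h.levelFun_crossing_eq_iff hk hp.1.ne hp.2.1).2 hp.2.2
  have hi' := (h.levelFun_crossing_eq_iff hk hq.1.ne hq.2.1).2 hq.2.2
  have hji := (line_crossing (C := C) hp.2.1).symm
  have hj' := (line_crossing (C := C) hq.2.1).symm
  rw [← hδ] at hi' hj'
  have h₁ := h.eq_or_eq hp.1.ne hji (hi'.symm.trans hi)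
  have h₂ := h.eq_or_eq hp.1.ne hji (hj'.trans (hi'.symm.trans hi))
  rcases h₁ with rfl | rfl <;> rcases h₂ with rfl | rfl <;> simp_all [lt_asymm]

theorem InGeneralPosition.ncard_vertexSet (h : InGeneralPosition M C) (hk : k < n) :
    {δ | IsVertex M C k δ}.ncard = #(levelPairs M C k) := by
  rw [h.vertexSet_eq hk, (h.injOn_crossing hk).ncard_image, Set.ncard_coe_finset]

lemma levelPairs_eq_of_crossOffset_neg_iff {M' C' : Fin n → ℝ}
    (hpar : ∀ i j, M' i = M' j ↔ M i = M j)
    (hsign : ∀ i j l, M i ≠ M j → (crossOffset M' C' i j l < 0 ↔ crossOffset M C i j l < 0)) :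
    levelPairs M' C' k = levelPairs M C k := by
  ext ⟨i, j⟩
  by_cases hM : M i = M j
  · simp [levelPairs, hM, (hpar i j).2 hM]
  · have hd : depth M' C' i j = depth M C i j :=
      congrArg Finset.card (filter_congr fun l _ => hsign i j l hM)
    simp [levelPairs, hM, hpar, hd]

section Perturbation

variable {m c e : Fin n → ℝ} {a b L β : ℝ}

lemma crossOffset_affine (ha : a ≠ 0) (hm : m i ≠ m j) :
    crossOffset (fun i => a * m i + b) (fun i => L * c i + β + e i) i j l =
      L * crossOffset m c i j l + crossOffset m e i j l := by
  have := sub_ne_zero.2 hm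
  simp only [crossOffset_eq, show a * m i + b - (a * m j + b) = a * (m i - m j) by ring]
  field_simp
  ring

lemma abs_crossOffset_le {r : ℝ} (he : ∀ i, |e i| ≤ r) :
    |crossOffset m e i j l| ≤ 2 * r * (|m l - m i| / |m i - m j| + 1) := by
  have hd (s t : Fin n) : |e s - e t| ≤ 2 * r := (abs_sub _ _).trans (by linarith [he s, he t])
  rw [crossOffset_eq]
  calc _ ≤ |m l - m i| * (|e j - e i| / |m i - m j|) + |e l - e i| := by
        rw [← abs_div, ← abs_mul]; exact abs_add_le _ _
    _ ≤ |m l - m i| * (2 * r / |m i - m j|) + 2 * r := by gcongr <;> apply hd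
    _ = _ := by ring

theorem InGeneralPosition.affine_perturb (h : InGeneralPosition m c) (ha : a ≠ 0)
    (hpar : ∀ i j, c i ≠ c j → 4 < L * |c i - c j|)
    (hoff : ∀ i j l, crossOffset m c i j l ≠ 0 →
      4 * (|m l - m i| / |m i - m j| + 1) < L * |crossOffset m c i j l|)
    (he : ∀ i, |e i| ≤ 2) :
    InGeneralPosition (fun i => a * m i + b) (fun i => L * c i + β + e i) ∧
      ∀ k, levelPairs (fun i => a * m i + b) (fun i => L * c i + β + e i) k = levelPairs m c k := by
  have hslope (i j : Fin n) : a * m i + b = a * m j + b ↔ m i = m j := by simp [ha]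
  have hsmall (i j l : Fin n) (hm : m i ≠ m j) (hli : l ≠ i) (hlj : l ≠ j) :
      |crossOffset m e i j l| < L * |crossOffset m c i j l| :=
    (abs_crossOffset_le he).trans_lt <| by
      linarith [hoff i j l ((inGeneralPosition_iff.1 h).2 i j l hm hli hlj)]
  refine ⟨inGeneralPosition_iff.2 ⟨fun i j hij hM hC => ?_, fun i j l hM hli hlj => ?_⟩,
    fun k => levelPairs_eq_of_crossOffset_neg_iff hslope fun i j l hm => ?_⟩
  · have hm := (hslope i j).1 hM
    refine mul_add_ne_zero_of_abs_lt (w := e i - e j) ?_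
      (by linarith : L * (c i - c j) + (e i - e j) = 0)
    exact ((abs_sub _ _).trans (by linarith [he i, he j])).trans_lt
      (hpar i j ((inGeneralPosition_iff.1 h).1 i j hij hm))
  · have hm := mt (hslope i j).2 hM
    rw [crossOffset_affine ha hm]
    exact mul_add_ne_zero_of_abs_lt (hsmall i j l hm hli hlj)
  · by_cases hli : l = i
    · simp [hli, crossOffset_left]
    by_cases hlj : l = j
    · rw [hlj, crossOffset_right hm, crossOffset_right (mt (hslope i j).1 hm)]
    rw [crossOffset_affine ha hm]
    exact mul_add_neg_iff_of_abs_lt (hsmall i j l hm hli hlj)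

theorem InGeneralPosition.exists_rounded_levelPairs_eq (h : InGeneralPosition m c) :
    ∃ M C : Fin n → ℝ, (∀ i, M i ∈ Ioo (1 : ℝ) 2) ∧ (∀ i, ∃ t : ℕ, C i / M i = t) ∧
      InGeneralPosition M C ∧ ∀ k, levelPairs M C k = levelPairs m c k := by
  set a : ℝ := 1 / (4 * (∑ i, |m i| + 1))
  have ha : 0 < a := by positivity
  set M : Fin n → ℝ := fun i => a * m i + 3 / 2
  have hM (i : Fin n) : M i ∈ Ioo (1 : ℝ) 2 := by
    have : |a * m i| ≤ 1 / 4 := by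
      rw [abs_mul, abs_of_pos ha, div_mul_eq_mul_div, one_mul, div_le_iff₀ (by positivity)]
      linarith [single_le_sum (fun j _ => abs_nonneg (m j)) (Finset.mem_univ i)]
    constructor <;> dsimp only [M] <;> linarith [abs_le.1 this]
  have hM₀ (i : Fin n) : 0 < M i := by linarith [(hM i).1]
  obtain ⟨L, hL, hpar, hoff⟩ := ((eventually_gt_atTop 0).and
    ((eventually_forall_lt_mul_abs (fun _ => 4) fun p : Fin n × Fin n => c p.1 - c p.2).and
      (eventually_forall_lt_mul_abs (fun q : Fin n × Fin n × Fin n =>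
        4 * (|m q.2.2 - m q.1| / |m q.1 - m q.2.1| + 1))
        fun q => crossOffset m c q.1 q.2.1 q.2.2))).exists
  -- `β` makes every `L * c i + β` nonnegative, so that `⌈·⌉₊` below really rounds up.
  set β := L * ∑ i, |c i|
  set t : Fin n → ℕ := fun i => ⌈(L * c i + β) / M i⌉₊
  set e : Fin n → ℝ := fun i => M i * t i - (L * c i + β)
  have he (i : Fin n) : |e i| ≤ 2 := by
    have hx : 0 ≤ (L * c i + β) / M i := by
      refine div_nonneg ?_ (hM₀ i).le
      nlinarith [neg_abs_le (c i), single_le_sum (fun j _ => abs_nonneg (c j)) (Finset.mem_univ i)]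
    have h₁ := Nat.le_ceil ((L * c i + β) / M i)
    have h₂ := Nat.ceil_lt_add_one hx
    have : e i = M i * (t i - (L * c i + β) / M i) := by
      have := (hM₀ i).ne'
      simp only [e]
      field_simp
    rw [this, abs_le]
    constructor <;> nlinarith [(hM i).2, hM₀ i]
  obtain ⟨hgp, hpairs⟩ := h.affine_perturb (b := 3 / 2) (β := β) ha.ne'
    (fun i j hc => hpar (i, j) (sub_ne_zero.2 hc)) (fun i j l h0 => hoff (i, j, l) h0) he
  refine ⟨M, _, hM, fun i => ⟨t i, ?_⟩, hgp, hpairs⟩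
  have := (hM₀ i).ne'
  simp only [e]
  field_simp
  ring

end Perturbation

end LineArrangement

open LineArrangement in
theorem stmt_9_general {n : ℕ} (m c : Fin n → ℝ)
    (hdist : ∀ i j : Fin n, i ≠ j → (m i, c i) ≠ (m j, c j))
    (hgen : ∀ i j k : Fin n, i ≠ j → j ≠ k → i ≠ k →
      ¬ ∃ δ : ℝ, m i * δ + c i = m j * δ + c j ∧ m j * δ + c j = m k * δ + c k) :
    ∃ m' c' : Fin n → ℝ,
      (∀ i, m' i ∈ Set.Ioo (1 : ℝ) 2) ∧
      (∀ i, ∃ t : ℕ, c' i / m' i = (t : ℝ)) ∧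
      (∀ k : ℕ, k < n →
        {δ : ℝ | IsVertex m c k δ}.ncard = {δ : ℝ | IsVertex m' c' k δ}.ncard) := by
  have h : InGeneralPosition m c := ⟨hdist, hgen⟩
  obtain ⟨m', c', hm', hc', h', hpairs⟩ := h.exists_rounded_levelPairs_eq
  exact ⟨m', c', hm', hc', fun k hk => by
    rw [h.ncard_vertexSet hk, h'.ncard_vertexSet hk, hpairs]⟩

/-- any line arrangement in general position with rational slopes can be
transformed into one with slopes in `(1,2)` and `c'_i/m'_i ∈ ℕ`, preserving the number of
vertices of every `k`-level. -/
theorem stmt_9 {n : ℕ} (hn : 1 ≤ n) (m c : Fin n → ℝ)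
    (hdist : ∀ i j : Fin n, i ≠ j → (m i, c i) ≠ (m j, c j))
    (hgen : ∀ i j k : Fin n, i ≠ j → j ≠ k → i ≠ k →
      ¬ ∃ δ : ℝ, m i * δ + c i = m j * δ + c j ∧ m j * δ + c j = m k * δ + c k)
    (hrat : ∀ i, ∃ q : ℚ, m i = (q : ℝ)) :
    ∃ m' c' : Fin n → ℝ,
      (∀ i, m' i ∈ Set.Ioo (1 : ℝ) 2) ∧
      (∀ i, ∃ t : ℕ, c' i / m' i = (t : ℝ)) ∧
      (∀ k : ℕ, k < n →
        {δ : ℝ | IsVertex m c k δ}.ncard = {δ : ℝ | IsVertex m' c' k δ}.ncard) :=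
  stmt_9_general m c hdist hgen
end
end

section
/- Let a, b, c, d be strictly positive reals with a < b, c < d, and (a,b) ≠ (c,d). Then the set {q ∈ ℝ : q > 0 and a^q + b^q = c^q + d^q} has at most one element. -/
/-!
If `p < r` both solve the equation, put `s = r / p > 1`. The pairs `(a^p, b^p)` and `(c^p, d^p)`
have the same sum and the same sum of `s`-th powers. For a strictly convex `f`, the value
`f x + f y` strictly increases as a pair `x ≤ y` of fixed sum spreads apart, so the two pairs
coincide.
-/

theorem StrictConvexOn.apply_lt_secant {s : Set ℝ} {f : ℝ → ℝ} (hf : StrictConvexOn ℝ s f)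
    {c d x : ℝ} (hc : c ∈ s) (hd : d ∈ s) (hcx : c < x) (hxd : x < d) :
    f x * (d - c) < (d - x) * f c + (x - c) * f d := by
  have hcd : 0 < d - c := by linarith
  have key := hf.2 hc hd (hcx.trans hxd).ne (div_pos (sub_pos.2 hxd) hcd)
    (div_pos (sub_pos.2 hcx) hcd) (by field_simp; ring)
  have hx : ((d - x) / (d - c)) • c + ((x - c) / (d - c)) • d = x := by
    simp only [smul_eq_mul]; field_simp; ring
  rwa [hx, smul_eq_mul, smul_eq_mul, div_mul_eq_mul_div, div_mul_eq_mul_div, ← add_div,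
    lt_div_iff₀ hcd] at key

theorem StrictConvexOn.apply_add_apply_lt {s : Set ℝ} {f : ℝ → ℝ} (hf : StrictConvexOn ℝ s f)
    {a b c d : ℝ} (hc : c ∈ s) (hd : d ∈ s) (hca : c < a) (hcb : c < b) (hsum : a + b = c + d) :
    f a + f b < f c + f d := by
  have hcd : 0 < d - c := by linarith
  have ha := hf.apply_lt_secant hc hd hca (by linarith)
  have hb := hf.apply_lt_secant hc hd hcb (by linarith)
  obtain rfl : b = c + d - a := by linarith
  exact lt_of_mul_lt_mul_right (by linear_combination ha + hb) hcd.le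

theorem StrictConvexOn.eq_of_add_eq_of_apply_add_eq {s : Set ℝ} {f : ℝ → ℝ}
    (hf : StrictConvexOn ℝ s f) {a b c d : ℝ} (ha : a ∈ s) (hb : b ∈ s) (hc : c ∈ s) (hd : d ∈ s)
    (hab : a ≤ b) (hcd : c ≤ d) (hsum : a + b = c + d) (hf_sum : f a + f b = f c + f d) :
    a = c := by
  by_contra hac
  rcases Ne.lt_or_gt hac with h | h
  · exact (hf.apply_add_apply_lt ha hb h (by linarith) hsum.symm).ne' hf_sum
  · exact (hf.apply_add_apply_lt hc hd h (by linarith) hsum).ne hf_sum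

theorem eq_and_eq_of_rpow_add_rpow_eq {a b c d p r : ℝ} (ha : 0 ≤ a) (hab : a ≤ b) (hc : 0 ≤ c)
    (hcd : c ≤ d) (hp : 0 < p) (hpr : p < r) (hp_eq : a ^ p + b ^ p = c ^ p + d ^ p)
    (hr_eq : a ^ r + b ^ r = c ^ r + d ^ r) : a = c ∧ b = d := by
  have hb := ha.trans hab
  have hd := hc.trans hcd
  have pow_pow : ∀ {x : ℝ}, 0 ≤ x → (x ^ p) ^ (r / p) = x ^ r := fun hx => by
    rw [← Real.rpow_mul hx, mul_div_cancel₀ _ hp.ne']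
  have hac : a ^ p = c ^ p :=
    (strictConvexOn_rpow ((one_lt_div hp).2 hpr)).eq_of_add_eq_of_apply_add_eq
      (Real.rpow_nonneg ha p) (Real.rpow_nonneg hb p)
      (Real.rpow_nonneg hc p) (Real.rpow_nonneg hd p)
      (Real.rpow_le_rpow ha hab hp.le) (Real.rpow_le_rpow hc hcd hp.le) hp_eq
      (by simpa only [pow_pow ha, pow_pow hb, pow_pow hc, pow_pow hd] using hr_eq)
  have hbd : b ^ p = d ^ p := by linarith
  exact ⟨(Real.rpow_left_inj ha hc hp.ne').1 hac, (Real.rpow_left_inj hb hd hp.ne').1 hbd⟩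

theorem stmt_10_general (a b c d : ℝ) (ha : 0 < a) (hc : 0 < c)
    (hab : a < b) (hcd : c < d) (hne : (a, b) ≠ (c, d)) :
    {q : ℝ | 0 < q ∧ a ^ q + b ^ q = c ^ q + d ^ q}.Subsingleton := by
  rintro p ⟨hp, hp_eq⟩ r ⟨hr, hr_eq⟩
  by_contra hpr
  apply hne
  rcases Ne.lt_or_gt hpr with h | h
  · obtain ⟨rfl, rfl⟩ := eq_and_eq_of_rpow_add_rpow_eq ha.le hab.le hc.le hcd.le hp h hp_eq hr_eq
    rfl
  · obtain ⟨rfl, rfl⟩ := eq_and_eq_of_rpow_add_rpow_eq ha.le hab.le hc.le hcd.le hr h hr_eq hp_eq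
    rfl

/-- for positive reals `a < b`, `c < d` with `(a,b) ≠ (c,d)`, the equation
`a^q + b^q = c^q + d^q` has at most one positive solution `q`. -/
theorem stmt_10 (a b c d : ℝ) (ha : 0 < a) (hb : 0 < b) (hc : 0 < c) (hd : 0 < d)
    (hab : a < b) (hcd : c < d) (hne : (a, b) ≠ (c, d)) :
    {q : ℝ | 0 < q ∧ a ^ q + b ^ q = c ^ q + d ^ q}.Subsingleton :=
  stmt_10_general a b c d ha hc hab hcd hne
end

section
/- Let n ≥ 1, let p ∈ ℕ^n have pairwise distinct positive integer entries, and let (i,t) and (j,u) be pairs with i, j ∈ [n], t, u nonnegative integers, and (i,t) ≠ (j,u). Then: (1) the set of q > 0 satisfying (1/p_i)·(t^q/2 + (t+1)^q/2)^{1/q} = (1/p_j)·(u^q/2 + (u+1)^q/2)^{1/q} has at most one element; and (2) if additionally t ≥ 1 and u ≥ 1, the set of q < 0 satisfying the same equation has at most one element. -/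
/-!
Since `M_q(T, T + 1) = (T + 1) M_q(r, 1)` with `r = T / (T + 1) ∈ [0, 1)`, two curves meet at `q`
exactly when `G_r(q) - G_s(q)` takes a certain constant value, where
`G_r(q) = log M_q(r, 1) = log ((r^q + 1) / 2) / q`. A direct computation gives
`q² G_r'(q) = φ(r^q)` with `φ(x) = x log x / (x + 1) - log ((x + 1) / 2)`, and
`φ'(x) = log x / (x + 1)²`, so `φ` decreases on `[0, 1]` and increases on `[1, ∞)`.
For `r < s` we have `r^q < s^q < 1` when `q > 0` and `r^q > s^q > 1` when `q < 0`, so in both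
cases `G_r - G_s` is strictly increasing and takes each value at most once. If `T = U` the two
curves are distinct multiples of each other and never meet.
-/

open Real Set

noncomputable def powerMeanSlope (x : ℝ) : ℝ := x * log x / (x + 1) - log ((x + 1) / 2)

noncomputable def logPowerMean (r q : ℝ) : ℝ := log ((r ^ q + 1) / 2) / q

lemma hasDerivAt_const_rpow_of_nonneg {r q : ℝ} (hr : 0 ≤ r) (hq : q ≠ 0) :
    HasDerivAt (fun q => r ^ q) (r ^ q * log r) q := by
  rcases hr.eq_or_lt with rfl | hr
  · rw [log_zero, mul_zero]
    exact (hasDerivAt_const q 0).congr_of_eventuallyEq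
      ((eventually_ne_nhds hq).mono fun x hx => zero_rpow hx)
  · exact (hasStrictDerivAt_const_rpow hr q).hasDerivAt

lemma rpow_mul_log_rpow {r : ℝ} (hr : 0 ≤ r) (q : ℝ) :
    r ^ q * log (r ^ q) = q * (r ^ q * log r) := by
  rcases hr.eq_or_lt with rfl | hr
  · rcases eq_or_ne q 0 with rfl | hq
    · simp
    · simp [zero_rpow hq]
  · rw [log_rpow hr]; ring

lemma hasDerivAt_logPowerMean {r q : ℝ} (hr : 0 ≤ r) (hq : q ≠ 0) :
    HasDerivAt (logPowerMean r) (powerMeanSlope (r ^ q) / q ^ 2) q := by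
  have hpos : 0 < (r ^ q + 1) / 2 := by positivity
  have h := ((((hasDerivAt_const_rpow_of_nonneg hr hq).add_const 1).div_const 2).log
    hpos.ne').div (hasDerivAt_id q) hq
  refine h.congr_deriv ?_
  simp only [powerMeanSlope, id]
  rw [rpow_mul_log_rpow hr]
  field_simp

lemma hasDerivAt_powerMeanSlope {x : ℝ} (hx : 0 < x) :
    HasDerivAt powerMeanSlope (log x / (x + 1) ^ 2) x := by
  have h := (((hasDerivAt_id x).mul (hasDerivAt_log hx.ne')).div
    ((hasDerivAt_id x).add_const 1) (by positivity)).sub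
    ((((hasDerivAt_id x).add_const 1).div_const 2).log (by positivity))
  refine h.congr_deriv ?_
  simp only [Pi.mul_apply, id]
  field_simp
  ring

lemma continuousOn_powerMeanSlope : ContinuousOn powerMeanSlope (Ici 0) := by
  intro x hx
  have hx : (0 : ℝ) ≤ x := hx
  unfold powerMeanSlope
  fun_prop (disch := positivity)

lemma strictAntiOn_powerMeanSlope : StrictAntiOn powerMeanSlope (Icc 0 1) := by
  refine strictAntiOn_of_deriv_neg (convex_Icc 0 1)
    (continuousOn_powerMeanSlope.mono Icc_subset_Ici_self) fun x hx => ?_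
  obtain ⟨hx0, hx1⟩ : x ∈ Ioo 0 1 := by rwa [interior_Icc] at hx
  rw [(hasDerivAt_powerMeanSlope hx0).deriv]
  exact div_neg_of_neg_of_pos (log_neg hx0 hx1) (pow_pos (by linarith) 2)

lemma strictMonoOn_powerMeanSlope : StrictMonoOn powerMeanSlope (Ici 1) := by
  refine strictMonoOn_of_deriv_pos (convex_Ici 1)
    (continuousOn_powerMeanSlope.mono (Ici_subset_Ici.2 zero_le_one)) fun x hx => ?_
  replace hx : 1 < x := by rwa [interior_Ici] at hx
  rw [(hasDerivAt_powerMeanSlope (zero_lt_one.trans hx)).deriv]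
  exact div_pos (log_pos hx) (pow_pos (by linarith) 2)

lemma strictMonoOn_logPowerMean_sub {r s : ℝ} {S : Set ℝ} (hS : Convex ℝ S)
    (hS0 : ∀ q ∈ S, q ≠ 0) (hr : 0 ≤ r) (hs : 0 ≤ s)
    (hslope : ∀ q ∈ interior S, powerMeanSlope (s ^ q) < powerMeanSlope (r ^ q)) :
    StrictMonoOn (fun q => logPowerMean r q - logPowerMean s q) S := by
  have hderiv : ∀ q ∈ S, HasDerivAt (fun q => logPowerMean r q - logPowerMean s q)
      ((powerMeanSlope (r ^ q) - powerMeanSlope (s ^ q)) / q ^ 2) q := fun q hq => by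
    rw [sub_div]
    exact (hasDerivAt_logPowerMean hr (hS0 q hq)).sub (hasDerivAt_logPowerMean hs (hS0 q hq))
  refine strictMonoOn_of_deriv_pos hS (fun q hq => (hderiv q hq).continuousAt.continuousWithinAt)
    fun q hq => ?_
  rw [(hderiv q (interior_subset hq)).deriv]
  exact div_pos (sub_pos.2 (hslope q hq)) (pow_two_pos_of_ne_zero (hS0 q (interior_subset hq)))

lemma strictMonoOn_logPowerMean_sub_Ioi {r s : ℝ} (hr : 0 ≤ r) (hrs : r < s) (hs : s < 1) :
    StrictMonoOn (fun q => logPowerMean r q - logPowerMean s q) (Ioi 0) := by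
  refine strictMonoOn_logPowerMean_sub (convex_Ioi 0) (fun q hq => hq.ne') hr (hr.trans hrs.le)
    fun q hq => ?_
  rw [interior_Ioi] at hq
  have hs0 : 0 ≤ s := hr.trans hrs.le
  exact strictAntiOn_powerMeanSlope ⟨rpow_nonneg hr q, (rpow_lt_one hr (hrs.trans hs) hq).le⟩
    ⟨rpow_nonneg hs0 q, (rpow_lt_one hs0 hs hq).le⟩ (rpow_lt_rpow hr hrs hq)

lemma strictMonoOn_logPowerMean_sub_Iio {r s : ℝ} (hr : 0 < r) (hrs : r < s) (hs : s < 1) :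
    StrictMonoOn (fun q => logPowerMean r q - logPowerMean s q) (Iio 0) := by
  refine strictMonoOn_logPowerMean_sub (convex_Iio 0) (fun q hq => hq.ne) hr.le (hr.le.trans hrs.le)
    fun q hq => ?_
  rw [interior_Iio] at hq
  have hsr := rpow_lt_rpow_of_neg hr hrs hq
  have hs1 := one_lt_rpow_of_pos_of_lt_one_of_neg (hr.trans hrs) hs hq
  exact strictMonoOn_powerMeanSlope hs1.le (hs1.trans hsr).le hsr

noncomputable def signpost (P T q : ℝ) : ℝ := 1 / P * (T ^ q / 2 + (T + 1) ^ q / 2) ^ (1 / q)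

lemma signpost_eq {P T q : ℝ} (hT : 0 ≤ T) (hq : q ≠ 0) :
    signpost P T q = (T + 1) / P * exp (logPowerMean (T / (T + 1)) q) := by
  have hT1 : 0 < T + 1 := by linarith
  have hmean : T ^ q / 2 + (T + 1) ^ q / 2 = (T + 1) ^ q * (((T / (T + 1)) ^ q + 1) / 2) := by
    rw [div_rpow hT hT1.le]
    field_simp [(rpow_pos_of_pos hT1 q).ne']
  have hpos : 0 < ((T / (T + 1)) ^ q + 1) / 2 := by positivity
  rw [signpost, hmean, mul_rpow (rpow_nonneg hT1.le q) hpos.le, one_div q, rpow_rpow_inv hT1.le hq,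
    rpow_def_of_pos hpos, logPowerMean, div_eq_mul_inv (log _)]
  ring

lemma logPowerMean_sub_eq_of_signpost_eq {P P' T U q : ℝ} (hP : 0 < P) (hP' : 0 < P')
    (hT : 0 ≤ T) (hU : 0 ≤ U) (hq : q ≠ 0) (h : signpost P T q = signpost P' U q) :
    logPowerMean (T / (T + 1)) q - logPowerMean (U / (U + 1)) q =
      log ((U + 1) / P') - log ((T + 1) / P) := by
  rw [signpost_eq hT hq, signpost_eq hU hq] at h
  have := congrArg log h
  rw [log_mul (by positivity) (exp_ne_zero _), log_mul (by positivity) (exp_ne_zero _), log_exp,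
    log_exp] at this
  linarith

lemma signpost_ne_of_ne {P P' T q : ℝ} (hP : 0 < P) (hP' : 0 < P') (hPP' : P ≠ P') (hT : 0 ≤ T)
    (hq : q ≠ 0) : signpost P T q ≠ signpost P' T q := by
  rw [signpost_eq hT hq, signpost_eq hT hq]
  intro h
  have := mul_right_cancel₀ (exp_ne_zero _) h
  rw [div_eq_div_iff hP.ne' hP'.ne', mul_right_inj' (by positivity)] at this
  exact hPP' this.symm

lemma div_add_one_lt_div_add_one {T U : ℝ} (hT : 0 ≤ T) (hTU : T < U) :
    T / (T + 1) < U / (U + 1) := by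
  rw [div_lt_div_iff₀ (by linarith) (by linarith)]
  linarith

lemma subsingleton_signpost_eq {S D : Set ℝ} (hD : D ⊆ Ici 0) (hS : ∀ q ∈ S, q ≠ 0)
    (hmono : ∀ T ∈ D, ∀ U ∈ D, T < U →
      StrictMonoOn (fun q => logPowerMean (T / (T + 1)) q - logPowerMean (U / (U + 1)) q) S)
    {P P' T U : ℝ} (hP : 0 < P) (hP' : 0 < P') (hT : T ∈ D) (hU : U ∈ D) (hne : (P, T) ≠ (P', U)) :
    {q | q ∈ S ∧ signpost P T q = signpost P' U q}.Subsingleton := by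
  wlog hTU : T ≤ U generalizing P P' T U
  · simpa only [eq_comm] using this hP' hP hU hT hne.symm (le_of_not_ge hTU)
  rcases hTU.eq_or_lt with rfl | hTU
  · rintro q ⟨hq, h⟩
    exact absurd h (signpost_ne_of_ne hP hP' (fun h => hne (by rw [h])) (hD hT) (hS q hq))
  · rintro q₁ ⟨hq₁, h₁⟩ q₂ ⟨hq₂, h₂⟩
    refine (hmono T hT U hU hTU).injOn hq₁ hq₂ ?_
    simp only [logPowerMean_sub_eq_of_signpost_eq hP hP' (hD hT) (hD hU) (hS _ hq₁) h₁,
      logPowerMean_sub_eq_of_signpost_eq hP hP' (hD hT) (hD hU) (hS _ hq₂) h₂]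

lemma subsingleton_signpost_eq_Ioi {P P' T U : ℝ} (hP : 0 < P) (hP' : 0 < P') (hT : 0 ≤ T)
    (hU : 0 ≤ U) (hne : (P, T) ≠ (P', U)) :
    {q | 0 < q ∧ signpost P T q = signpost P' U q}.Subsingleton :=
  subsingleton_signpost_eq subset_rfl (fun _ hq => ne_of_gt hq)
    (fun x (hx : 0 ≤ x) y _ hxy => strictMonoOn_logPowerMean_sub_Ioi (by positivity)
      (div_add_one_lt_div_add_one hx hxy) ((div_lt_one (by linarith)).2 (lt_add_one y)))
    hP hP' hT hU hne

lemma subsingleton_signpost_eq_Iio {P P' T U : ℝ} (hP : 0 < P) (hP' : 0 < P') (hT : 0 < T)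
    (hU : 0 < U) (hne : (P, T) ≠ (P', U)) :
    {q | q < 0 ∧ signpost P T q = signpost P' U q}.Subsingleton :=
  subsingleton_signpost_eq Ioi_subset_Ici_self (fun _ hq => ne_of_lt hq)
    (fun x (hx : 0 < x) y _ hxy => strictMonoOn_logPowerMean_sub_Iio (by positivity)
      (div_add_one_lt_div_add_one hx.le hxy) ((div_lt_one (by linarith)).2 (lt_add_one y)))
    hP hP' hT hU hne

theorem stmt_11_general {n : ℕ} (p : Fin n → ℕ) (hp : ∀ i, 0 < p i)
    (hpdist : ∀ i j : Fin n, i ≠ j → p i ≠ p j)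
    (i j : Fin n) (t u : ℕ) (hne : (i, t) ≠ (j, u)) :
    {q : ℝ | 0 < q ∧
        (1 / (p i : ℝ)) * (((t : ℝ) ^ q / 2 + ((t : ℝ) + 1) ^ q / 2) ^ (1 / q)) =
          (1 / (p j : ℝ)) * (((u : ℝ) ^ q / 2 + ((u : ℝ) + 1) ^ q / 2) ^ (1 / q))}.Subsingleton ∧
    (1 ≤ t → 1 ≤ u →
      {q : ℝ | q < 0 ∧
        (1 / (p i : ℝ)) * (((t : ℝ) ^ q / 2 + ((t : ℝ) + 1) ^ q / 2) ^ (1 / q)) =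
          (1 / (p j : ℝ)) * (((u : ℝ) ^ q / 2 + ((u : ℝ) + 1) ^ q / 2) ^ (1 / q))}.Subsingleton) := by
  have hP : ∀ k, (0 : ℝ) < p k := fun k => Nat.cast_pos.2 (hp k)
  have hne' : ((p i : ℝ), (t : ℝ)) ≠ ((p j : ℝ), (u : ℝ)) := by
    intro h
    obtain ⟨hpij, htu⟩ := Prod.mk.inj h
    rcases eq_or_ne i j with rfl | hij
    · exact hne (by rw [Nat.cast_injective htu])
    · exact hpdist i j hij (Nat.cast_injective hpij)
  exact ⟨subsingleton_signpost_eq_Ioi (hP i) (hP j) t.cast_nonneg u.cast_nonneg hne',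
    fun ht hu => subsingleton_signpost_eq_Iio (hP i) (hP j) (by exact_mod_cast ht)
      (by exact_mod_cast hu) hne'⟩

/-- any two distinct power-mean signpost curves
`q ↦ (1/p_i)·(t^q/2 + (t+1)^q/2)^{1/q}` intersect at most once on `q > 0`, and (for `t,u ≥ 1`)
at most once on `q < 0`. -/
theorem stmt_11 {n : ℕ} (hn : 1 ≤ n) (p : Fin n → ℕ) (hp : ∀ i, 0 < p i)
    (hpdist : ∀ i j : Fin n, i ≠ j → p i ≠ p j)
    (i j : Fin n) (t u : ℕ) (hne : (i, t) ≠ (j, u)) :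
    {q : ℝ | 0 < q ∧
        (1 / (p i : ℝ)) * (((t : ℝ) ^ q / 2 + ((t : ℝ) + 1) ^ q / 2) ^ (1 / q)) =
          (1 / (p j : ℝ)) * (((u : ℝ) ^ q / 2 + ((u : ℝ) + 1) ^ q / 2) ^ (1 / q))}.Subsingleton ∧
    (1 ≤ t → 1 ≤ u →
      {q : ℝ | q < 0 ∧
        (1 / (p i : ℝ)) * (((t : ℝ) ^ q / 2 + ((t : ℝ) + 1) ^ q / 2) ^ (1 / q)) =
          (1 / (p j : ℝ)) * (((u : ℝ) ^ q / 2 + ((u : ℝ) + 1) ^ q / 2) ^ (1 / q))}.Subsingleton) :=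
  stmt_11_general p hp hpdist i j t u hne
end

section
/- For every integer house size H ≥ 1 and every ε > 0, there exist an integer n ≥ 1, a population vector p ∈ ℕ^n, and a state i ∈ [n] such that every x ∈ f(p,H;0) satisfies |x_i − q_i| ≥ H − 1 − ε. -/
open scoped Classical
open Set

noncomputable section

/-!
The instance has `H` states: one of population `N` and `H - 1` of population `1`. Adams rounding
never rounds a positive number down to `0`, so each of the `H` states receives at least one of the
`H` seats, hence exactly one. The big state's quota `N H / (N + H - 1)` tends to `H` as `N → ∞`,
so its deviation from the single seat it gets approaches `H - 1`.
-/

lemma one_le_of_mem_roundSet_zero {r : ℝ} (hr : 0 < r) {x : ℕ} (hx : x ∈ roundSet 0 r) :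
    1 ≤ x := by
  rcases hx with ⟨hneg, -⟩ | ⟨t, rfl, -, hup⟩ | ⟨t, hxt, rfl⟩
  · linarith
  · exact_mod_cast (by linarith : (0 : ℝ) < x)
  · have ht : 0 < t := by exact_mod_cast (by linarith : (0 : ℝ) < t)
    omega

lemma eq_one_of_mem_divisorOutput_zero_card {n : ℕ} {p : Fin n → ℕ} (hp : ∀ i, 0 < p i)
    {x : Fin n → ℕ} (hx : x ∈ divisorOutput p n 0) (i : Fin n) : x i = 1 := by
  obtain ⟨hsum, lam, hlam, hround⟩ := hx
  have hone : ∀ j ∈ Finset.univ, 1 ≤ x j := fun j _ =>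
    one_le_of_mem_roundSet_zero (mul_pos hlam (by exact_mod_cast hp j)) (hround j)
  have hsum_one : ∑ j, x j = ∑ _j : Fin n, 1 := by simpa using hsum
  exact ((Finset.sum_eq_sum_iff_of_le hone).1 hsum_one.symm i (Finset.mem_univ i)).symm

def oneLargeState (m N : ℕ) : Fin (m + 1) → ℕ :=
  Fin.cons N fun _ => 1

lemma oneLargeState_pos {m N : ℕ} (hN : 0 < N) (i : Fin (m + 1)) : 0 < oneLargeState m N i := by
  cases i using Fin.cases <;> simp [oneLargeState, hN]

lemma quota_oneLargeState_zero (m N : ℕ) :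
    quota (oneLargeState m N) (m + 1) 0 = N * (m + 1) / (N + m) := by
  simp [quota, oneLargeState, Fin.sum_univ_succ]

lemma sub_le_mul_div_add {a b ε : ℝ} (ha : 0 < a) (hb : 0 ≤ b) (hε : 0 ≤ ε)
    (hab : b * (b + 1) ≤ a * ε) : b + 1 - ε ≤ a * (b + 1) / (a + b) := by
  rw [le_div_iff₀ (by positivity)]
  nlinarith [mul_nonneg hε hb]

/-- for every house size `H` and every `ε > 0` there is an instance on which the
Adams method (`δ = 0`) deviates from some quota by at least `H − 1 − ε`. -/
theorem stmt_12 (H : ℕ) (hH : 1 ≤ H) (ε : ℝ) (hε : 0 < ε) :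
    ∃ (n : ℕ), 1 ≤ n ∧ ∃ (p : Fin n → ℕ), (∀ i, 0 < p i) ∧ ∃ i : Fin n,
      ∀ x ∈ divisorOutput p H 0, (H : ℝ) - 1 - ε ≤ |(x i : ℝ) - quota p H i| := by
  obtain ⟨m, rfl⟩ := Nat.exists_eq_add_of_le' hH
  obtain ⟨N, hN⟩ := exists_nat_gt ((m : ℝ) * (m + 1) / ε)
  have hNpos : 0 < N := by
    exact_mod_cast (div_nonneg (by positivity) hε.le).trans_lt hN
  refine ⟨m + 1, by omega, oneLargeState m N, oneLargeState_pos hNpos, 0, fun x hx => ?_⟩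
  have hx0 : x 0 = 1 := eq_one_of_mem_divisorOutput_zero_card (oneLargeState_pos hNpos) hx 0
  have hquota : ((m + 1 : ℕ) : ℝ) - ε ≤ quota (oneLargeState m N) (m + 1) 0 := by
    rw [quota_oneLargeState_zero]
    push_cast
    exact sub_le_mul_div_add (by exact_mod_cast hNpos) (by positivity) hε.le
      ((div_lt_iff₀ hε).1 hN).le
  rw [abs_sub_comm, hx0, Nat.cast_one]
  push_cast at hquota ⊢
  linarith [le_abs_self (quota (oneLargeState m N) (m + 1) 0 - 1)]
end
end

section
/- For every integer house size H ≥ 1, every δ ∈ (0,1], and every ε > 0, there exist an integer n ≥ 1, a population vector p ∈ ℕ^n, and a state i ∈ [n] such that every x ∈ f(p,H;δ) satisfies |x_i − q_i| ≥ H − ε. -/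
/-!
Give one state a population `A` with `δ·A ≥ H + 1` and add `N` states of population `1`.
If the multiplier `λ` is below `δ`, every small state rounds to `0`, so the big state takes the
whole house; otherwise the big state alone rounds to at least `λ·A - 1 ≥ δ·A - 1 ≥ H` seats.
Either way it gets all `H` seats, while its quota `A·H/(A + N)` tends to `0` as `N → ∞`.
-/

open scoped Classical
open Set

noncomputable section

lemma roundSet_sub_one_le {δ r : ℝ} {x : ℕ} (hδ : δ ≤ 1) (hx : x ∈ roundSet δ r) :
    r - 1 ≤ x := by
  rcases hx with ⟨hr, rfl⟩ | ⟨t, rfl, -, hhi⟩ | ⟨t, rfl | rfl, rfl⟩ <;> push_cast <;> linarith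

lemma roundSet_eq_zero_of_lt {δ r : ℝ} {x : ℕ} (hr : r < δ) (hx : x ∈ roundSet δ r) :
    x = 0 := by
  rcases hx with ⟨-, rfl⟩ | ⟨x, rfl, hlo, -⟩ | ⟨t, -, rfl⟩
  · rfl
  · have : (x : ℝ) < 1 := by linarith
    exact Nat.lt_one_iff.mp (mod_cast this)
  · linarith [(Nat.cast_nonneg t : (0 : ℝ) ≤ t)]

def dominantInstance (A N : ℕ) : Fin (N + 1) → ℕ :=
  Fin.cons A fun _ => 1

lemma quota_dominantInstance_zero (A N H : ℕ) :
    quota (dominantInstance A N) H 0 = A * H / (A + N) := by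
  simp [quota, dominantInstance, Fin.sum_univ_succ]

lemma dominantInstance_apportion_zero {A N H : ℕ} {δ : ℝ} (hδ : δ ≤ 1)
    (hA : H + 1 ≤ δ * A) {x : Fin (N + 1) → ℕ}
    (hx : x ∈ divisorOutput (dominantInstance A N) H δ) : x 0 = H := by
  obtain ⟨hsum, lam, -, hround⟩ := hx
  have hle : x 0 ≤ H :=
    hsum ▸ Finset.single_le_sum (fun i _ => Nat.zero_le (x i)) (Finset.mem_univ 0)
  rcases lt_or_ge lam δ with hlt | hge
  · have hsmall : ∀ i : Fin N, x i.succ = 0 := fun i =>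
      roundSet_eq_zero_of_lt (by simpa [dominantInstance] using hlt) (hround i.succ)
    simpa [Fin.sum_univ_succ, hsmall] using hsum
  · have hbig : lam * A - 1 ≤ x 0 := by
      simpa [dominantInstance] using roundSet_sub_one_le hδ (hround 0)
    have : (H : ℝ) ≤ x 0 := by
      linarith [mul_le_mul_of_nonneg_right hge (Nat.cast_nonneg (α := ℝ) A)]
    exact le_antisymm hle (by exact_mod_cast this)

theorem stmt_13_general (H : ℕ) (δ : ℝ) (hδ : δ ∈ Set.Ioc (0 : ℝ) 1)
    (ε : ℝ) (hε : 0 < ε) :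
    ∃ (n : ℕ), 1 ≤ n ∧ ∃ (p : Fin n → ℕ), (∀ i, 0 < p i) ∧ ∃ i : Fin n,
      ∀ x ∈ divisorOutput p H δ, (H : ℝ) - ε ≤ |(x i : ℝ) - quota p H i| := by
  obtain ⟨hδ0, hδ1⟩ := hδ
  set A := ⌈((H : ℝ) + 1) / δ⌉₊
  set N := ⌈(A : ℝ) * H / ε⌉₊
  have hA : (H : ℝ) + 1 ≤ δ * A := (div_le_iff₀' hδ0).1 (Nat.le_ceil _)
  have hN : (A : ℝ) * H ≤ ε * N := (div_le_iff₀' hε).1 (Nat.le_ceil _)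
  have hA0 : 0 < A := Nat.ceil_pos.2 (by positivity)
  refine ⟨N + 1, by omega, dominantInstance A N, Fin.cases hA0 fun _ => Nat.one_pos, 0,
    fun x hx => ?_⟩
  have hquota : quota (dominantInstance A N) H 0 ≤ ε := by
    rw [quota_dominantInstance_zero, div_le_iff₀ (by positivity)]
    linarith [mul_nonneg hε.le (Nat.cast_nonneg (α := ℝ) A)]
  rw [dominantInstance_apportion_zero hδ1 hA hx]
  linarith [le_abs_self ((H : ℝ) - quota (dominantInstance A N) H 0)]

/-- for every house size `H`, every `δ ∈ (0,1]` and every `ε > 0` there is an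
instance on which the `δ`-divisor method deviates from some quota by at least `H − ε`. -/
theorem stmt_13 (H : ℕ) (hH : 1 ≤ H) (δ : ℝ) (hδ : δ ∈ Set.Ioc (0 : ℝ) 1)
    (ε : ℝ) (hε : 0 < ε) :
    ∃ (n : ℕ), 1 ≤ n ∧ ∃ (p : Fin n → ℕ), (∀ i, 0 < p i) ∧ ∃ i : Fin n,
      ∀ x ∈ divisorOutput p H δ, (H : ℝ) - ε ≤ |(x i : ℝ) - quota p H i| :=
  stmt_13_general H δ hδ ε hε
end
end

section
/- Let (p,H) be an apportionment instance, let μ be a Borel probability measure on [0,1] with ∫ δ dμ(δ) = 1/2, and let x : [0,1] → ℕ₀^n be a measurable function with x(δ) ∈ f(p,H;δ) for every δ ∈ [0,1]. Then for every i ∈ [n], |∫ x_i(δ) dμ(δ) − q_i| ≤ (1/2)·(p_i / min_{j∈[n]} p_j + 1). -/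
open scoped Classical
open Set

noncomputable section

open MeasureTheory

/-! If `x ∈ f(p,H;δ)` with multiplier `λ`, every `x_j` lies in `[λ p_j - δ, λ p_j - δ + 1]`;
summing over the states pins `λ P` between `H + nδ - n` and `H + nδ`. Hence, with
`s = n p_i / P`, the quantity `x_i - (s - 1) δ` lies in `[q_i - s, q_i + 1]` for every `δ`.
Integrating against `μ`, whose mean is `1/2`, gives `|E x_i - q_i| ≤ (s + 1)/2`, and
`s ≤ p_i / min_j p_j` because `n min_j p_j ≤ P`. -/

lemma roundSet_bounds {δ r : ℝ} (hδ : δ ≤ 1) (hr : 0 ≤ r) {x : ℕ} (hx : x ∈ roundSet δ r) :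
    (x : ℝ) ∈ Icc (r - δ) (r - δ + 1) := by
  rcases hx with ⟨hrδ, rfl⟩ | ⟨t, rfl, h₁, h₂⟩ | ⟨t, rfl | rfl, rfl⟩
  · constructor <;> simp <;> linarith
  · constructor <;> linarith
  · constructor <;> linarith
  · constructor <;> push_cast <;> linarith

lemma sub_mul_mem_Icc_of_mem_divisorOutput {n : ℕ} {p : Fin n → ℕ} {H : ℕ} {δ : ℝ}
    (hP : 0 < ∑ j, (p j : ℝ)) (hδ : δ ≤ 1) {x : Fin n → ℕ} (hx : x ∈ divisorOutput p H δ)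
    (i : Fin n) :
    (x i : ℝ) - (n * p i / ∑ j, (p j : ℝ) - 1) * δ ∈
      Icc (quota p H i - n * p i / ∑ j, (p j : ℝ)) (quota p H i + 1) := by
  obtain ⟨hsum, lam, hlam, hmem⟩ := hx
  set P := ∑ j, (p j : ℝ)
  have hcoord j : (x j : ℝ) ∈ Icc (lam * p j - δ) (lam * p j - δ + 1) :=
    roundSet_bounds hδ (by positivity) (hmem j)
  have hH : (H : ℝ) = ∑ j, (x j : ℝ) := by exact_mod_cast hsum.symm
  have hlow : lam * P - n * δ ≤ H := by
    rw [hH]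
    calc lam * P - n * δ = ∑ j, (lam * p j - δ) := by
          simp [P, Finset.sum_sub_distrib, Finset.mul_sum]
      _ ≤ ∑ j, (x j : ℝ) := Finset.sum_le_sum fun j _ => (hcoord j).1
  have hhigh : H ≤ lam * P - n * δ + n := by
    rw [hH]
    calc ∑ j, (x j : ℝ) ≤ ∑ j, (lam * p j - δ + 1) := Finset.sum_le_sum fun j _ => (hcoord j).2
      _ = lam * P - n * δ + n := by
          simp [P, Finset.sum_add_distrib, Finset.sum_sub_distrib, Finset.mul_sum]
  set u := (p i : ℝ) / P
  have hu : 0 ≤ u := by positivity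
  have hlam_i : lam * p i = u * (lam * P) := by simp only [u]; field_simp
  have hq : quota p H i = u * H := by simp only [quota, u]; ring
  have hs : (n : ℝ) * p i / P = n * u := by ring
  rw [hq, hs]
  have h₁ := mul_le_mul_of_nonneg_left hlow hu
  have h₂ := mul_le_mul_of_nonneg_left hhigh hu
  obtain ⟨hxi₁, hxi₂⟩ := hcoord i
  constructor <;> linarith

lemma sub_mul_integral_mem_Icc {Ω : Type*} [MeasurableSpace Ω] {μ : Measure Ω}
    [IsProbabilityMeasure μ] {g X : Ω → ℝ} {k a b : ℝ} (hg : AEStronglyMeasurable g μ)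
    (hX : Integrable X μ) (h : ∀ᵐ ω ∂μ, g ω - k * X ω ∈ Icc a b) :
    ∫ ω, g ω ∂μ - k * ∫ ω, X ω ∂μ ∈ Icc a b := by
  have hkX : Integrable (fun ω => k * X ω) μ := hX.const_mul k
  have hdiff : Integrable (fun ω => g ω - k * X ω) μ :=
    .of_bound (hg.sub hkX.aestronglyMeasurable) (max |a| |b|) <| h.mono fun ω hω =>
      abs_le_max_abs_abs hω.1 hω.2
  have hgint : Integrable g μ :=
    (hdiff.add hkX).congr (ae_of_all _ fun ω => sub_add_cancel _ _)
  rw [← integral_const_mul, ← integral_sub hgint hkX]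
  constructor
  · simpa using integral_mono_ae (integrable_const a) hdiff (h.mono fun _ hω => hω.1)
  · simpa using integral_mono_ae hdiff (integrable_const b) (h.mono fun _ hω => hω.2)

lemma card_mul_div_sum_le_div_iInf {ι : Type*} [Fintype ι] {p : ι → ℝ} (hp : ∀ j, 0 < p j)
    (i : ι) : Fintype.card ι * p i / ∑ j, p j ≤ p i / ⨅ j, p j := by
  have hne : Nonempty ι := ⟨i⟩
  have hmin : 0 < ⨅ j, p j := exists_eq_ciInf_of_finite.elim fun j hj => hj ▸ hp j
  have hsum : Fintype.card ι * ⨅ j, p j ≤ ∑ j, p j := by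
    simpa using Finset.univ.card_nsmul_le_sum p _ fun j _ => ciInf_le (Finite.bddBelow_range p) j
  rw [div_le_div_iff₀ (hsum.trans_lt' (by positivity)) hmin]
  nlinarith [(hp i).le]

theorem stmt_15_general {n : ℕ} (p : Fin n → ℕ) (hp : ∀ i, 0 < p i)
    (H : ℕ)
    (μ : Measure ℝ) [IsProbabilityMeasure μ] (hsupp : μ (Set.Icc (0 : ℝ) 1) = 1)
    (hmean : ∫ δ, δ ∂μ = 1 / 2)
    (x : ℝ → (Fin n → ℕ)) (hmeas : Measurable x)
    (hsel : ∀ δ ∈ Set.Icc (0 : ℝ) 1, x δ ∈ divisorOutput p H δ)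
    (i : Fin n) :
    |(∫ δ, ((x δ i : ℕ) : ℝ) ∂μ) - quota p H i| ≤
      (1 / 2) * ((p i : ℝ) / (⨅ j : Fin n, (p j : ℝ)) + 1) := by
  have hp' j : (0 : ℝ) < p j := by exact_mod_cast hp j
  have hP : 0 < ∑ j, (p j : ℝ) := Finset.sum_pos (fun j _ => hp' j) ⟨i, Finset.mem_univ i⟩
  have hunit : ∀ᵐ δ ∂μ, δ ∈ Icc (0 : ℝ) 1 :=
    (ae_mem_iff_measure_eq measurableSet_Icc.nullMeasurableSet).2 (by rw [hsupp, measure_univ])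
  have hdev := sub_mul_integral_mem_Icc (X := id)
    (by fun_prop : AEStronglyMeasurable (fun δ => ((x δ i : ℕ) : ℝ)) μ)
    (.of_integral_ne_zero (by simp [hmean]))
    (hunit.mono fun δ hδ => sub_mul_mem_Icc_of_mem_divisorOutput hP hδ.2 (hsel δ hδ) i)
  have hspread := card_mul_div_sum_le_div_iInf hp' i
  simp only [id, hmean, Fintype.card_fin, mem_Icc] at hdev hspread
  rw [abs_le]
  constructor <;> linarith [hdev.1, hdev.2]

/-- a randomized stationary divisor method whose shift distribution has mean
`1/2` deviates in expectation from each quota by at most `(p_i / min_j p_j + 1)/2`. -/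
theorem stmt_15 {n : ℕ} (hn : 1 ≤ n) (p : Fin n → ℕ) (hp : ∀ i, 0 < p i)
    (H : ℕ) (hH : 1 ≤ H)
    (μ : Measure ℝ) [IsProbabilityMeasure μ] (hsupp : μ (Set.Icc (0 : ℝ) 1) = 1)
    (hmean : ∫ δ, δ ∂μ = 1 / 2)
    (x : ℝ → (Fin n → ℕ)) (hmeas : Measurable x)
    (hsel : ∀ δ ∈ Set.Icc (0 : ℝ) 1, x δ ∈ divisorOutput p H δ)
    (i : Fin n) :
    |(∫ δ, ((x δ i : ℕ) : ℝ) ∂μ) - quota p H i| ≤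
      (1 / 2) * ((p i : ℝ) / (⨅ j : Fin n, (p j : ℝ)) + 1) :=
  stmt_15_general p hp H μ hsupp hmean x hmeas hsel i
end
end

section
/- Let n ≥ 1 be an integer, let δ ∈ [0,1]^n satisfy (n − (n mod 2))/2 ≤ δ_1 + … + δ_n ≤ (n + (n mod 2))/2, and let r ∈ [0,1)^n. Then the number of indices i ∈ [n] with r_i > δ_i deviates from r_1 + … + r_n by at most (n + (n mod 2))/2, i.e. | #{i ∈ [n] : r_i > δ_i} − ∑_{i=1}^n r_i | ≤ (n + (n mod 2))/2. -/
/-! Each index contributes `[δ_i < r_i] - r_i ∈ [-δ_i, 1 - δ_i]`, so the deviation lies in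
`[-∑ δ_i, n - ∑ δ_i]`; the bounds on `∑ δ_i` make both ends at most `(n + n mod 2)/2` in size. -/

section Threshold

variable {δ r : ℝ}

lemma neg_le_ite_lt_sub (hδ : 0 ≤ δ) (hr : r ≤ 1) :
    -δ ≤ (if δ < r then (1 : ℝ) else 0) - r := by
  split_ifs with h <;> linarith

lemma ite_lt_sub_le_one_sub (hδ : δ ≤ 1) (hr : 0 ≤ r) :
    (if δ < r then (1 : ℝ) else 0) - r ≤ 1 - δ := by
  split_ifs with h <;> linarith

end Threshold

section Rounding

variable {ι : Type*} (s : Finset ι) (δ r : ι → ℝ)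

lemma card_filter_lt_eq_sum_ite :
    ((s.filter fun i => δ i < r i).card : ℝ) = ∑ i ∈ s, if δ i < r i then (1 : ℝ) else 0 := by
  rw [Finset.card_filter]
  push_cast
  rfl

lemma neg_sum_le_card_filter_lt_sub_sum (hδ : ∀ i ∈ s, 0 ≤ δ i) (hr : ∀ i ∈ s, r i ≤ 1) :
    -∑ i ∈ s, δ i ≤ ((s.filter fun i => δ i < r i).card : ℝ) - ∑ i ∈ s, r i := by
  rw [card_filter_lt_eq_sum_ite, ← Finset.sum_sub_distrib, ← Finset.sum_neg_distrib]
  exact Finset.sum_le_sum fun i hi => neg_le_ite_lt_sub (hδ i hi) (hr i hi)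

lemma card_filter_lt_sub_sum_le (hδ : ∀ i ∈ s, δ i ≤ 1) (hr : ∀ i ∈ s, 0 ≤ r i) :
    ((s.filter fun i => δ i < r i).card : ℝ) - ∑ i ∈ s, r i ≤ s.card - ∑ i ∈ s, δ i := by
  rw [card_filter_lt_eq_sum_ite, ← Finset.sum_sub_distrib, ← nsmul_one, ← Finset.sum_const,
    ← Finset.sum_sub_distrib]
  exact Finset.sum_le_sum fun i hi => ite_lt_sub_le_one_sub (hδ i hi) (hr i hi)

end Rounding

theorem stmt_17_general (n : ℕ) (δ r : Fin n → ℝ)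
    (hδ : ∀ i, δ i ∈ Set.Icc (0 : ℝ) 1) (hr : ∀ i, r i ∈ Set.Ico (0 : ℝ) 1)
    (hlo : ((n : ℝ) - (n % 2 : ℕ)) / 2 ≤ ∑ i, δ i)
    (hhi : ∑ i, δ i ≤ ((n : ℝ) + (n % 2 : ℕ)) / 2) :
    |((Finset.univ.filter fun i : Fin n => δ i < r i).card : ℝ) - ∑ i, r i| ≤
      ((n : ℝ) + (n % 2 : ℕ)) / 2 := by
  have hlower := neg_sum_le_card_filter_lt_sub_sum Finset.univ δ r
    (fun i _ => (hδ i).1) (fun i _ => (hr i).2.le)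
  have hupper := card_filter_lt_sub_sum_le Finset.univ δ r
    (fun i _ => (hδ i).2) (fun i _ => (hr i).1)
  rw [Finset.card_univ, Fintype.card_fin] at hupper
  rw [abs_le]
  constructor <;> linarith

/-- if the shifts `δ_i ∈ [0,1]` sum to a value in
`[(n − n mod 2)/2, (n + n mod 2)/2]` and `r_i ∈ [0,1)`, then the number of indices with
`r_i > δ_i` deviates from `∑ r_i` by at most `(n + n mod 2)/2`. -/
theorem stmt_17 (n : ℕ) (hn : 1 ≤ n) (δ r : Fin n → ℝ)
    (hδ : ∀ i, δ i ∈ Set.Icc (0 : ℝ) 1) (hr : ∀ i, r i ∈ Set.Ico (0 : ℝ) 1)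
    (hlo : ((n : ℝ) - (n % 2 : ℕ)) / 2 ≤ ∑ i, δ i)
    (hhi : ∑ i, δ i ≤ ((n : ℝ) + (n % 2 : ℕ)) / 2) :
    |((Finset.univ.filter fun i : Fin n => δ i < r i).card : ℝ) - ∑ i, r i| ≤
      ((n : ℝ) + (n % 2 : ℕ)) / 2 :=
  stmt_17_general n δ r hδ hr hlo hhi
end

section
/- For every i ∈ [n], let s_i : ℕ₀ → ℝ be a signpost sequence, and assume the fixed-divisor method f given by f_i(p,H) = N_{s_i}(q_i) satisfies quota, i.e., ⌊q_i⌋ ≤ f_i(p,H) ≤ ⌈q_i⌉ for every instance (p,H) and every i. Then for every ε > 0 there exist a population vector p ∈ ℕ^n and an integer house size H ≥ 1 such that |∑_{i=1}^n f_i(p,H) − H| ≥ n/2 − 1 − ε. -/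
open scoped Classical
open Set

noncomputable section

/-- A signpost sequence. -/
def IsSignpost (s : ℕ → ℝ) : Prop :=
  (∀ t : ℕ, (t : ℝ) ≤ s t ∧ s t ≤ (t : ℝ) + 1) ∧
  ((∃ t' : ℕ, s t' = (t' : ℝ)) → ∀ t : ℕ, s t < (t : ℝ) + 1) ∧
  ((∃ t' : ℕ, s t' = (t' : ℝ) + 1) → ∀ t : ℕ, (t : ℝ) < s t)

/-- `N_s(r) = #{k ∈ ℕ₀ : s(k) < r}`. -/
def Nsign (s : ℕ → ℝ) (r : ℝ) : ℕ := {k : ℕ | s k < r}.ncard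

/-!
Quota at the instances with equal populations forces `s_i(0) < 1` and `s_i(1) < 2`, so on
quotas `q ∈ [1, 2]` the method gives one seat when `q ≤ s_i(1)` and two seats otherwise.
Put `δ_i = s_i(1) - 1 ∈ [0, 1)` and `T = ⌊(n - 1)/2⌋`, so that `2T < n` and `T ≥ n/2 - 1`.
Either `∑ δ_i > T`, and rational quotas `1 + θ_i` with `θ_i ≤ δ_i` and `∑ θ_i = T` give every
state one seat although `H = n + T`; or `∑ (1 - δ_i) > T`, and quotas `2 - θ_i` with
`θ_i < 1 - δ_i` and `∑ θ_i = T` give every state two seats although `H = 2n - T`.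
Rational quotas summing to an integer `H` are realised by populations over a common denominator.
-/

lemma Nsign_eq_of_lt_iff {s : ℕ → ℝ} {r : ℝ} {m : ℕ} (h : ∀ k, s k < r ↔ k < m) :
    Nsign s r = m := by
  rw [Nsign, show {k | s k < r} = Iio m from Set.ext h, ncard_Iio_nat]

lemma lt_of_le_Nsign {s : ℕ → ℝ} (hs : ∀ t : ℕ, (t : ℝ) ≤ s t) {m : ℕ}
    (hm : m ≤ Nsign s m) {k : ℕ} (hk : k < m) : s k < m := by
  have hsub : {k | s k < m} ⊆ Iio m := fun k hk =>
    show k < m by exact_mod_cast (hs k).trans_lt hk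
  have heq := Set.eq_of_subset_of_ncard_le hsub (by rwa [ncard_Iio_nat]) (finite_Iio m)
  exact (heq ▸ hk : k ∈ {k | s k < m})

lemma two_le_apply_add_two {s : ℕ → ℝ} (hs : ∀ t : ℕ, (t : ℝ) ≤ s t) (k : ℕ) : 2 ≤ s (k + 2) := by
  have := hs (k + 2)
  push_cast at this
  linarith [k.cast_nonneg (α := ℝ)]

lemma Nsign_eq_one {s : ℕ → ℝ} (hs : ∀ t : ℕ, (t : ℝ) ≤ s t) (hs0 : s 0 < 1) {r : ℝ}
    (hr1 : 1 ≤ r) (hr : r ≤ s 1) (hr2 : r ≤ 2) : Nsign s r = 1 := by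
  refine Nsign_eq_of_lt_iff fun k => ?_
  rcases k with _ | _ | k
  · simpa using hs0.trans_le hr1
  · simpa using hr
  · simpa using hr2.trans (two_le_apply_add_two hs k)

lemma Nsign_eq_two {s : ℕ → ℝ} (hs : ∀ t : ℕ, (t : ℝ) ≤ s t) (hs0 : s 0 < 1) {r : ℝ}
    (hr : s 1 < r) (hr2 : r ≤ 2) : Nsign s r = 2 := by
  refine Nsign_eq_of_lt_iff fun k => ?_
  rcases k with _ | _ | k
  · simpa using hs0.trans_le (by simpa using (hs 1).trans hr.le)
  · simpa using hr
  · simpa using hr2.trans (two_le_apply_add_two hs k)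

lemma exists_rat_approx_le {a c : ℝ} (ha : 0 ≤ a) (hc : 0 < c) :
    ∃ r : ℚ, 0 ≤ r ∧ (r : ℝ) ≤ a ∧ (0 < a → (r : ℝ) < a) ∧ a - c < r := by
  rcases ha.eq_or_lt with rfl | ha
  · exact ⟨0, le_rfl, by simp, by simp, by simpa using hc⟩
  obtain ⟨r, hlo, hhi⟩ := exists_rat_btwn (max_lt (sub_lt_self a hc) ha)
  exact ⟨r, by exact_mod_cast (le_max_right _ _).trans hlo.le, hhi.le, fun _ => hhi,
    (le_max_left _ _).trans_lt hlo⟩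

lemma exists_rat_le_sum_eq {ι : Type*} [Fintype ι] {a : ι → ℝ} (ha : ∀ i, 0 ≤ a i) {T : ℚ}
    (hT0 : 0 ≤ T) (hT : (T : ℝ) < ∑ i, a i) :
    ∃ q : ι → ℚ, (∀ i, 0 ≤ q i) ∧ (∀ i, (q i : ℝ) ≤ a i) ∧ (∀ i, 0 < a i → (q i : ℝ) < a i) ∧
      ∑ i, q i = T := by
  set c := ((∑ i, a i) - T) / (Fintype.card ι + 1)
  have hc : 0 < c := div_pos (by linarith) (by positivity)
  choose r hr0 hra hra' hrc using fun i => exists_rat_approx_le (ha i) hc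
  have hTr : T < ∑ i, r i := by
    have hcard : (Fintype.card ι : ℝ) * c < (∑ i, a i) - T := by
      have : ((Fintype.card ι : ℝ) + 1) * c = (∑ i, a i) - T := mul_div_cancel₀ _ (by positivity)
      linarith
    have : ∑ i, (a i - c) ≤ ∑ i, (r i : ℝ) := Finset.sum_le_sum fun i _ => (hrc i).le
    rw [Finset.sum_sub_distrib, Finset.sum_const, Finset.card_univ, nsmul_eq_mul] at this
    exact_mod_cast (show (T : ℝ) < ((∑ i, r i : ℚ) : ℝ) by push_cast; linarith)
  have hr : 0 < ∑ i, r i := hT0.trans_lt hTr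
  have hscale : T / ∑ i, r i ≤ 1 := (div_le_one hr).2 hTr.le
  refine ⟨fun i => r i * (T / ∑ j, r j), fun i => mul_nonneg (hr0 i) (div_nonneg hT0 hr.le),
    fun i => ?_, fun i hi => ?_, ?_⟩
  · exact (Rat.cast_le.2 (mul_le_of_le_one_right (hr0 i) hscale)).trans (hra i)
  · exact (Rat.cast_le.2 (mul_le_of_le_one_right (hr0 i) hscale)).trans_lt (hra' i hi)
  · rw [← Finset.sum_mul, mul_div_cancel₀ _ hr.ne']

lemma exists_natCast_eq_mul_of_den_dvd {x : ℚ} (hx : 0 ≤ x) {D : ℕ} (h : x.den ∣ D) :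
    ∃ c : ℕ, (c : ℚ) = D * x := by
  obtain ⟨k, rfl⟩ := h
  refine ⟨k * x.num.toNat, ?_⟩
  have hnum : ((x.num.toNat : ℤ) : ℚ) = x.num := by
    rw [Int.toNat_of_nonneg (Rat.num_nonneg.2 hx)]
  push_cast at hnum ⊢
  rw [hnum, mul_comm (x.den : ℚ), mul_assoc, Rat.den_mul_eq_num]

lemma exists_quota_eq {n : ℕ} {x : Fin n → ℚ} (hx : ∀ i, 0 < x i) {H : ℕ}
    (hH : ∑ i, x i = H) : ∃ p : Fin n → ℕ, (∀ i, 0 < p i) ∧ ∀ i, quota p H i = x i := by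
  set D := ∏ i, (x i).den
  have hD : 0 < D := Finset.prod_pos fun i _ => (x i).den_pos
  choose p hp using fun i => exists_natCast_eq_mul_of_den_dvd (hx i).le
    (Finset.dvd_prod_of_mem (fun j => (x j).den) (Finset.mem_univ i))
  have hpR : ∀ i, (p i : ℝ) = D * x i := fun i => by
    exact_mod_cast congrArg (Rat.cast (K := ℝ)) (hp i)
  have hHR : ∑ i, (x i : ℝ) = H := by exact_mod_cast hH
  refine ⟨p, fun i => by
    have := hx i
    exact_mod_cast (show (0 : ℚ) < p i by rw [hp i]; positivity), fun i => ?_⟩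
  have hHpos : (0 : ℝ) < H := hHR ▸ (Rat.cast_pos.2 (hx i)).trans_le
    (Finset.single_le_sum (fun j _ => (Rat.cast_pos.2 (hx j)).le) (Finset.mem_univ i))
  simp only [quota, hpR, ← Finset.mul_sum, hHR]
  field_simp

lemma quota_const_one {n : ℕ} (hn : 1 ≤ n) (m : ℕ) (i : Fin n) :
    quota (fun _ => 1) (m * n) i = m := by
  have : (n : ℝ) ≠ 0 := by positivity
  simp [quota, field]

lemma lt_of_floor_quota_le_Nsign {n : ℕ} (hn : 1 ≤ n) {s : Fin n → ℕ → ℝ}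
    (hs : ∀ i (t : ℕ), (t : ℝ) ≤ s i t)
    (hquota : ∀ H : ℕ, 1 ≤ H → ∀ i : Fin n,
      ⌊quota (fun _ => 1) H i⌋ ≤ (Nsign (s i) (quota (fun _ => 1) H i) : ℤ))
    (m : ℕ) (hm : 1 ≤ m) (i : Fin n) {k : ℕ} (hk : k < m) : s i k < m := by
  have := hquota (m * n) (Nat.one_le_iff_ne_zero.2 (by positivity)) i
  rw [quota_const_one hn, Int.floor_natCast] at this
  exact lt_of_le_Nsign (hs i) (by exact_mod_cast this) hk

section UniformRounding

variable {n : ℕ} {s : Fin n → ℕ → ℝ} (hs : ∀ i (t : ℕ), (t : ℝ) ≤ s i t) (hs0 : ∀ i, s i 0 < 1)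
  (hs1 : ∀ i, s i 1 < 2)
include hs hs0 hs1

lemma exists_Nsign_quota_eq_one {T : ℕ} (hT : (T : ℝ) < ∑ i, (s i 1 - 1)) :
    ∃ p : Fin n → ℕ, (∀ i, 0 < p i) ∧ ∀ i, Nsign (s i) (quota p (n + T) i) = 1 := by
  have hs1' : ∀ i, 1 ≤ s i 1 := fun i => by simpa using hs i 1
  obtain ⟨q, hq0, hq, -, hqT⟩ := exists_rat_le_sum_eq (fun i => sub_nonneg.2 (hs1' i))
    (Nat.cast_nonneg T) (by exact_mod_cast hT)
  obtain ⟨p, hp, hpq⟩ := exists_quota_eq (x := fun i => 1 + q i) (H := n + T)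
    (fun i => by have := hq0 i; positivity) (by simp [Finset.sum_add_distrib, hqT])
  refine ⟨p, hp, fun i => ?_⟩
  have hq0' : (0 : ℝ) ≤ q i := by exact_mod_cast hq0 i
  rw [hpq]
  push_cast
  exact Nsign_eq_one (hs i) (hs0 i) (by linarith) (by linarith [hq i])
    (by linarith [hq i, hs1 i])

lemma exists_Nsign_quota_eq_two {T H : ℕ} (hH : H + T = 2 * n)
    (hT : (T : ℝ) < ∑ i, (2 - s i 1)) :
    ∃ p : Fin n → ℕ, (∀ i, 0 < p i) ∧ ∀ i, Nsign (s i) (quota p H i) = 2 := by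
  have hs1' : ∀ i, 1 ≤ s i 1 := fun i => by simpa using hs i 1
  obtain ⟨q, hq0, -, hq, hqT⟩ := exists_rat_le_sum_eq (fun i => sub_nonneg.2 (hs1 i).le)
    (Nat.cast_nonneg T) (by exact_mod_cast hT)
  have hq1 : ∀ i, q i < 1 := fun i => by
    exact_mod_cast (show (q i : ℝ) < 1 by linarith [hq i (sub_pos.2 (hs1 i)), hs1' i])
  obtain ⟨p, hp, hpq⟩ := exists_quota_eq (x := fun i => 2 - q i) (H := H)
    (fun i => by linarith [hq1 i]) (by
      have : (H : ℚ) + T = 2 * n := by exact_mod_cast hH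
      simp only [Finset.sum_sub_distrib, Finset.sum_const, Finset.card_univ, Fintype.card_fin,
        nsmul_eq_mul, hqT]
      linarith)
  refine ⟨p, hp, fun i => ?_⟩
  have hq0' : (0 : ℝ) ≤ q i := by exact_mod_cast hq0 i
  rw [hpq]
  push_cast
  exact Nsign_eq_two (hs i) (hs0 i) (by linarith [hq i (sub_pos.2 (hs1 i))]) (by linarith)

lemma exists_le_abs_sum_Nsign_sub {T : ℕ} (hTn : 2 * T < n) :
    ∃ p : Fin n → ℕ, (∀ i, 0 < p i) ∧ ∃ H : ℕ, 1 ≤ H ∧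
      (T : ℝ) ≤ |(∑ i, (Nsign (s i) (quota p H i) : ℝ)) - (H : ℝ)| := by
  have hsplit : ∑ i, (s i 1 - 1) + ∑ i, (2 - s i 1) = n := by
    rw [← Finset.sum_add_distrib]
    norm_num
  rcases lt_or_ge (T : ℝ) (∑ i, (s i 1 - 1)) with hA | hA
  · obtain ⟨p, hp, hN⟩ := exists_Nsign_quota_eq_one hs hs0 hs1 hA
    refine ⟨p, hp, n + T, by omega, le_of_eq ?_⟩
    simp [hN]
  · have hB : (T : ℝ) < ∑ i, (2 - s i 1) := by
      have : (2 * T : ℝ) < n := by exact_mod_cast hTn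
      linarith
    obtain ⟨p, hp, hN⟩ := exists_Nsign_quota_eq_two hs hs0 hs1 (by omega : 2 * n - T + T = 2 * n) hB
    refine ⟨p, hp, 2 * n - T, by omega, le_of_eq ?_⟩
    simp only [hN, Finset.sum_const, Finset.card_univ, Fintype.card_fin, nsmul_eq_mul,
      Nat.cast_ofNat, Nat.cast_mul, Nat.cast_sub (show T ≤ 2 * n by omega)]
    rw [mul_comm, sub_sub_cancel, abs_of_nonneg (Nat.cast_nonneg T)]

end UniformRounding

/-- every quota-compliant fixed-divisor method can deviate from the house size
by at least `n/2 − 1 − ε` on some instance. -/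
theorem stmt_18 (n : ℕ) (hn : 1 ≤ n) (s : Fin n → ℕ → ℝ) (hs : ∀ i, IsSignpost (s i))
    (hquota : ∀ (p : Fin n → ℕ), (∀ i, 0 < p i) → ∀ H : ℕ, 1 ≤ H → ∀ i : Fin n,
      ⌊quota p H i⌋ ≤ (Nsign (s i) (quota p H i) : ℤ) ∧
        (Nsign (s i) (quota p H i) : ℤ) ≤ ⌈quota p H i⌉)
    (ε : ℝ) (hε : 0 < ε) :
    ∃ (p : Fin n → ℕ), (∀ i, 0 < p i) ∧ ∃ H : ℕ, 1 ≤ H ∧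
      (n : ℝ) / 2 - 1 - ε ≤ |(∑ i, (Nsign (s i) (quota p H i) : ℝ)) - (H : ℝ)| := by
  have hs' : ∀ i (t : ℕ), (t : ℝ) ≤ s i t := fun i t => ((hs i).1 t).1
  have hlt :=
    lt_of_floor_quota_le_Nsign hn hs' fun H hH i => (hquota _ (fun _ => one_pos) H hH i).1
  have hs0 : ∀ i, s i 0 < 1 := fun i => by simpa using hlt 1 le_rfl i zero_lt_one
  have hs1 : ∀ i, s i 1 < 2 := fun i => by simpa using hlt 2 one_le_two i one_lt_two
  set T := (n - 1) / 2
  obtain ⟨p, hp, H, hH, hdev⟩ := exists_le_abs_sum_Nsign_sub hs' hs0 hs1 (show 2 * T < n by omega)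
  refine ⟨p, hp, H, hH, le_trans ?_ hdev⟩
  have hnT : (n : ℝ) ≤ 2 * T + 2 := by exact_mod_cast (show n ≤ 2 * T + 2 by omega)
  linarith
end
end

section
/- Let (p,H) be an apportionment instance with P = p_1 + … + p_n, and let K(p,H) ⊆ ℝ^{[n]×[H]} be the polytope of all x satisfying: ∑_{i=1}^n x(i,t) = 1 for every t ∈ [H]; ⌊t·p_i/P⌋ ≤ ∑_{ℓ=1}^t x(i,ℓ) ≤ ⌈t·p_i/P⌉ for every i ∈ [n] and t ∈ [H]; and x(i,t) ≥ 0 for every i ∈ [n] and t ∈ [H]. Then every extreme point of K(p,H) has all coordinates in {0,1}; in particular the linear program is integral. -/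
/-
The constraints of `K(p,H)` are those of a flow network: seat `t` sends one unit to the states
along edges carrying `x(i,t)`, and state `i` passes its running total `∑_{ℓ ≤ t} x(i,ℓ)` from
seat `t` to seat `t+1` and finally into a sink. Every net flow of this network is an integer, so
a vertex touching an edge with fractional value touches at least two; hence the fractional edges
carry a nonzero circulation. Moving `x` along it in both directions keeps all integral values,
in particular those at a bound `0`, `⌊t p_i / P⌋` or `⌈t p_i / P⌉`, fixed, and stays in
`K(p,H)` for small steps. So an extreme point has no fractional edge.
-/

open scoped Classical

noncomputable section

/-- The polytope `K(p,H)` of fractional house-monotone, quota-compliant seat assignments: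
`x (i,t) = 1` means seat `t` is given to state `i`. Seat `t : Fin H` represents seat `t+1`. -/
def apportionmentPolytope {n : ℕ} (p : Fin n → ℕ) (H : ℕ) : Set (Fin n → Fin H → ℝ) :=
  {x | (∀ t : Fin H, ∑ i, x i t = 1) ∧
       (∀ (i : Fin n) (t : Fin H),
          (⌊(((t : ℕ) + 1 : ℝ)) * (p i : ℝ) / (∑ j, (p j : ℝ))⌋ : ℝ) ≤
              ∑ ℓ ∈ Finset.univ.filter (fun ℓ : Fin H => ℓ ≤ t), x i ℓ ∧
            ∑ ℓ ∈ Finset.univ.filter (fun ℓ : Fin H => ℓ ≤ t), x i ℓ ≤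
              (⌈(((t : ℕ) + 1 : ℝ)) * (p i : ℝ) / (∑ j, (p j : ℝ))⌉ : ℝ)) ∧
       (∀ (i : Fin n) (t : Fin H), 0 ≤ x i t)}

open Finset Filter Topology

theorem LinearMap.ker_ne_bot_of_sum_apply_eq_zero {K ι κ : Type*} [Field K] [Fintype ι]
    [Fintype κ] [Nonempty κ] (φ : (ι → K) →ₗ[K] κ → K) (hφ : ∀ x, ∑ k, φ x k = 0)
    (hcard : Fintype.card κ ≤ Fintype.card ι) : LinearMap.ker φ ≠ ⊥ := by
  have hrange : LinearMap.range φ ≠ ⊤ := by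
    intro htop
    obtain ⟨k⟩ := ‹Nonempty κ›
    obtain ⟨x, hx⟩ : Pi.single k (1 : K) ∈ LinearMap.range φ := htop ▸ Submodule.mem_top
    simpa [hx] using hφ x
  have hlt := Submodule.finrank_lt hrange
  have := φ.finrank_range_add_finrank_ker
  simp only [Module.finrank_fintype_fun_eq_card] at hlt this
  exact Submodule.one_le_finrank_iff.mp (by omega)

theorem eq_zero_of_mem_extremePoints_of_eventually_add_smul_mem {F : Type*} [AddCommGroup F]
    [Module ℝ F] {A : Set F} {x d : F} (hx : x ∈ A.extremePoints ℝ)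
    (hd : ∀ᶠ s in 𝓝 (0 : ℝ), x + s • d ∈ A) : d = 0 := by
  obtain ⟨ε, hε, hball⟩ := Metric.eventually_nhds_iff.1 hd
  have hsmall : |ε / 2| < ε := by rw [abs_of_pos (half_pos hε)]; exact half_lt_self hε
  have hplus : x + (ε / 2) • d ∈ A := hball (by rwa [Real.dist_0_eq_abs])
  have hminus : x - (ε / 2) • d ∈ A := by
    simpa [neg_smul, ← sub_eq_add_neg] using
      hball (y := -(ε / 2)) (by rwa [Real.dist_0_eq_abs, abs_neg])
  simpa [hε.ne'] using hx.2 hplus hminus (mem_openSegment_add_sub _ _)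

theorem eventually_le_add_mul {a b c : ℝ} (hab : a ≤ b) (hc : a = b → c = 0) :
    ∀ᶠ s in 𝓝 (0 : ℝ), a ≤ b + s * c := by
  rcases hab.lt_or_eq with hlt | heq
  · have : Tendsto (fun s : ℝ => b + s * c) (𝓝 0) (𝓝 b) := by
      simpa using (Continuous.tendsto (f := fun s : ℝ => b + s * c) (by fun_prop) 0)
    exact (this.eventually (eventually_gt_nhds hlt)).mono fun _ => le_of_lt
  · simp [hc heq, heq]

theorem eventually_add_mul_le {a b c : ℝ} (hba : b ≤ a) (hc : b = a → c = 0) :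
    ∀ᶠ s in 𝓝 (0 : ℝ), b + s * c ≤ a :=
  (eventually_le_add_mul (neg_le_neg hba) fun h => neg_eq_zero.2 (hc (neg_inj.1 h).symm)).mono
    fun s hs => by linarith

section NetFlow

variable {E V M : Type*} [Fintype E] [DecidableEq V] [AddCommGroup M] (tail head : E → V)

def netFlow (f : E → M) (v : V) : M :=
  ∑ e with tail e = v, f e - ∑ e with head e = v, f e

variable {tail head}

theorem netFlow_sub (f g : E → M) (v : V) :
    netFlow tail head (f - g) v = netFlow tail head f v - netFlow tail head g v := by
  simp only [netFlow, Pi.sub_apply, sum_sub_distrib]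
  abel

theorem netFlow_single [DecidableEq E] (e : E) (a : M) (v : V) :
    netFlow tail head (Pi.single e a) v =
      (if tail e = v then a else 0) - (if head e = v then a else 0) := by
  simp [netFlow, sum_pi_single']

theorem netFlow_mem {G : AddSubgroup M} {f : E → M} {v : V}
    (hf : ∀ e, tail e = v ∨ head e = v → f e ∈ G) : netFlow tail head f v ∈ G :=
  G.sub_mem (G.sum_mem fun e he => hf e (.inl (mem_filter.1 he).2))
    (G.sum_mem fun e he => hf e (.inr (mem_filter.1 he).2))

theorem sum_netFlow [Fintype V] (f : E → M) : ∑ v, netFlow tail head f v = 0 := by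
  simp [netFlow, sum_sub_distrib, sum_fiberwise]

theorem exists_ne_notMem_of_netFlow_mem (hloop : ∀ e, tail e ≠ head e) {G : AddSubgroup M}
    {f : E → M} (hf : ∀ v, netFlow tail head f v ∈ G) {e : E} (he : f e ∉ G) {v : V}
    (hv : tail e = v ∨ head e = v) :
    ∃ e', e' ≠ e ∧ f e' ∉ G ∧ (tail e' = v ∨ head e' = v) := by
  by_contra hothers
  have hrest : netFlow tail head (Function.update f e 0) v ∈ G := by
    refine netFlow_mem fun e' he' => ?_
    rcases eq_or_ne e' e with rfl | hne
    · simp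
    · rw [Function.update_of_ne hne]
      by_contra hfe'
      exact hothers ⟨e', hne, hfe', he'⟩
  have hsingle := G.sub_mem (hf v) hrest
  rw [← netFlow_sub, show f - Function.update f e 0 = Pi.single e (f e) by
    ext e'; rcases eq_or_ne e' e with rfl | hne <;> simp [*], netFlow_single] at hsingle
  rcases hv with rfl | rfl
  · simp [hloop e |>.symm, he] at hsingle
  · simp [hloop e, he] at hsingle

theorem exists_ne_zero_netFlow_eq_zero {K : Type*} [Field K] [Fintype V] {S : Finset E}
    (hS : S.Nonempty)
    (hdeg : ∀ v, ∀ e ∈ S, tail e = v ∨ head e = v →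
      ∃ e' ∈ S, e' ≠ e ∧ (tail e' = v ∨ head e' = v)) :
    ∃ δ : E → K, δ ≠ 0 ∧ (∀ e ∉ S, δ e = 0) ∧ ∀ v, netFlow tail head δ v = 0 := by
  set T := S.biUnion fun e => {tail e, head e}
  have hT : ∀ v, v ∈ T ↔ ∃ e ∈ S, tail e = v ∨ head e = v := by
    intro v; simp [T, eq_comm]
  -- Every vertex of `T` meets at least two edges of `S` and every edge meets at most two
  -- vertices, so `#T ≤ #S`; the net-flow map `(S → K) → (T → K)` lands in the hyperplane of
  -- vectors summing to zero, hence has a nontrivial kernel.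
  have hcard : #T ≤ #S := by
    have := card_mul_le_card_mul (fun v e => tail e = v ∨ head e = v) (m := 2) (n := 2)
      (s := T) (t := S) ?_ ?_
    · omega
    · intro v hv
      obtain ⟨e, he, hev⟩ := (hT v).1 hv
      obtain ⟨e', he', hne, he'v⟩ := hdeg v e he hev
      exact one_lt_card.2 ⟨e, by simp [he, hev], e', by simp [he', he'v], hne.symm⟩
    · intro e _
      calc #(T.bipartiteBelow _ e) ≤ #({tail e, head e} : Finset V) :=
            card_le_card fun v hv => by simp at hv ⊢; tauto
        _ ≤ 2 := card_le_two
  have hflowT : ∀ δ : E → K, (∀ e ∉ S, δ e = 0) → ∀ v ∉ T, netFlow tail head δ v = 0 := by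
    intro δ hδ v hv
    exact AddSubgroup.mem_bot.1 <| netFlow_mem fun e he =>
      AddSubgroup.mem_bot.2 <| hδ e fun heS => hv ((hT v).2 ⟨e, heS, he⟩)
  let ext : (S → K) →ₗ[K] E → K := Function.ExtendByZero.linearMap K Subtype.val
  have hext : ∀ y, ∀ e ∉ S, ext y e = 0 := by
    intro y e he
    simp [ext, Function.extend, he]
  let φ : (S → K) →ₗ[K] T → K :=
    { toFun := fun y v => netFlow tail head (ext y) v
      map_add' := fun y z => by
        ext v; simp only [map_add, netFlow, Pi.add_apply, sum_add_distrib]; abel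
      map_smul' := fun c y => by
        ext v; simp only [map_smul, netFlow, Pi.smul_apply, smul_eq_mul, ← mul_sum, mul_sub]
        rfl }
  have hφ : ∀ y, ∑ v : T, φ y v = 0 := by
    intro y
    change ∑ v : T, netFlow tail head (ext y) v = 0
    rw [sum_coe_sort T (netFlow tail head (ext y)), ← sum_netFlow (V := V) (ext y)]
    exact sum_subset (subset_univ T) fun v _ hv => hflowT _ (hext y) v hv
  have : Nonempty T := by
    obtain ⟨e, he⟩ := hS
    exact ⟨tail e, (hT _).2 ⟨e, he, .inl rfl⟩⟩
  obtain ⟨y, hy, hy0⟩ := Submodule.ne_bot_iff _ |>.1 <|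
    φ.ker_ne_bot_of_sum_apply_eq_zero hφ (by simpa using hcard)
  refine ⟨ext y, fun h => hy0 ?_, hext y, fun v => ?_⟩
  · exact Function.extend_injective Subtype.val_injective (0 : E → K) (h.trans ext.map_zero.symm)
  · by_cases hv : v ∈ T
    · exact congrFun (LinearMap.mem_ker.1 hy) ⟨v, hv⟩
    · exact hflowT _ (hext y) v hv

theorem exists_ne_zero_netFlow_eq_zero_of_netFlow_mem {K : Type*} [Field K] [Fintype V]
    (hloop : ∀ e, tail e ≠ head e) {G : AddSubgroup K} {f : E → K}
    (hf : ∀ v, netFlow tail head f v ∈ G) (hfrac : ∃ e, f e ∉ G) :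
    ∃ δ : E → K, δ ≠ 0 ∧ (∀ e, f e ∈ G → δ e = 0) ∧ ∀ v, netFlow tail head δ v = 0 := by
  obtain ⟨e, he⟩ := hfrac
  obtain ⟨δ, hδ, hsupp, hflow⟩ := exists_ne_zero_netFlow_eq_zero (K := K) (tail := tail)
    (head := head) (S := univ.filter fun e => f e ∉ G) ⟨e, by simpa using he⟩ fun v e he hev => by
      obtain ⟨e', hne, he', he'v⟩ :=
        exists_ne_notMem_of_netFlow_mem hloop hf (mem_filter.1 he).2 hev
      exact ⟨e', by simpa using he', hne, he'v⟩
  exact ⟨δ, hδ, fun e he => hsupp e (by simpa using he), hflow⟩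

end NetFlow

namespace Apportionment

variable {n H : ℕ} {M : Type*}

/- Edge `.inl (i, t)` carries `x i t` from seat `t` (vertex `.inl (some t)`) to the state vertex
`.inr (i, t)`; edge `.inr (i, t)` carries the running total of state `i` after seat `t` on to
`.inr (i, t + 1)`, or to the sink `.inl none` after the last seat. -/
abbrev Edge (n H : ℕ) := (Fin n × Fin H) ⊕ (Fin n × Fin H)

abbrev Vertex (n H : ℕ) := Option (Fin H) ⊕ (Fin n × Fin H)

def tail : Edge n H → Vertex n H
  | .inl (_, t) => .inl (some t)
  | .inr (i, t) => .inr (i, t)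

def head : Edge n H → Vertex n H
  | .inl (i, t) => .inr (i, t)
  | .inr (i, t) => if h : (t : ℕ) + 1 < H then .inr (i, ⟨t + 1, h⟩) else .inl none

def cumSum [AddCommMonoid M] (c : Fin H → M) (t : Fin H) : M :=
  ∑ ℓ with ℓ ≤ t, c ℓ

def flow [AddCommMonoid M] (x : Fin n → Fin H → M) : Edge n H → M
  | .inl (i, t) => x i t
  | .inr (i, t) => cumSum (x i) t

theorem tail_ne_head (e : Edge n H) : tail e ≠ head e := by
  rcases e with ⟨i, t⟩ | ⟨i, t⟩
  · simp [tail, head]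
  · by_cases h : (t : ℕ) + 1 < H <;> simp [tail, head, h, Fin.ext_iff]

@[simp] theorem tail_inl (i : Fin n) (t : Fin H) : tail (.inl (i, t)) = .inl (some t) := rfl

@[simp] theorem tail_inr (i : Fin n) (t : Fin H) : tail (.inr (i, t)) = .inr (i, t) := rfl

@[simp] theorem head_inl (i : Fin n) (t : Fin H) : head (.inl (i, t)) = .inr (i, t) := rfl

@[simp]
theorem head_inr_ne_inl_some (j : Fin n) (s t : Fin H) :
    head (.inr (j, s)) ≠ .inl (some t) := by
  simp only [head]; split_ifs <;> simp

@[simp]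
theorem head_inr_eq_inr_iff (j i : Fin n) (s t : Fin H) :
    head (.inr (j, s)) = .inr (i, t) ↔ j = i ∧ s.val + 1 = t.val := by
  simp only [head]; split_ifs with h
  · simp [Fin.ext_iff, eq_comm (b := t.val)]
  · simp only [false_iff, not_and]; omega

@[simp]
theorem head_inr_eq_inl_none (j : Fin n) (s : Fin H) :
    head (.inr (j, s)) = .inl none ↔ s.val + 1 = H := by
  simp only [head]; split_ifs <;> simp <;> omega

theorem cumSum_eq_add_sum_prev [AddCommMonoid M] (c : Fin H → M) (t : Fin H) :
    cumSum c t = c t + ∑ s : Fin H with s.val + 1 = t.val, cumSum c s := by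
  rcases Nat.eq_zero_or_pos t.val with h0 | hpos
  · have hprev : (univ.filter fun s : Fin H => s.val + 1 = t.val) = ∅ := by
      ext s; simp only [mem_filter, mem_univ, true_and, notMem_empty, iff_false]; omega
    have hle : (univ.filter fun ℓ => ℓ ≤ t) = {t} := by
      ext ℓ
      simp only [mem_filter, mem_univ, true_and, mem_singleton, Fin.le_iff_val_le_val, Fin.ext_iff]
      omega
    rw [cumSum, hle, hprev, sum_singleton, sum_empty, add_zero]
  · obtain ⟨s, hst⟩ : ∃ s : Fin H, s.val + 1 = t.val := ⟨⟨t - 1, by omega⟩, by simp; omega⟩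
    have hprev : (univ.filter fun s : Fin H => s.val + 1 = t.val) = {s} := by
      ext s'; simp only [mem_filter, mem_univ, true_and, mem_singleton, Fin.ext_iff]; omega
    have hle : (univ.filter fun ℓ => ℓ ≤ t) = insert t (univ.filter fun ℓ => ℓ ≤ s) := by
      ext ℓ
      simp only [mem_filter, mem_univ, true_and, mem_insert, Fin.le_iff_val_le_val, Fin.ext_iff]
      omega
    have hts : t ∉ univ.filter fun ℓ : Fin H => ℓ ≤ s := by
      simp only [mem_filter, mem_univ, true_and, Fin.le_iff_val_le_val]; omega
    rw [cumSum, hle, sum_insert hts, hprev, sum_singleton, cumSum]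

theorem eq_cumSum_of_eq_add_sum_prev [AddCommMonoid M] {g c : Fin H → M}
    (h : ∀ t, g t = c t + ∑ s : Fin H with s.val + 1 = t.val, g s) : g = cumSum c := by
  funext t
  induction t using WellFoundedLT.induction with
  | _ t ih =>
    rw [h t, cumSum_eq_add_sum_prev c t]
    congr 1
    exact sum_congr rfl fun s hs => ih s (Fin.lt_def.2 (by simp at hs; omega))

variable [AddCommGroup M]

theorem netFlow_seat (f : Edge n H → M) (t : Fin H) :
    netFlow tail head f (.inl (some t)) = ∑ i, f (.inl (i, t)) := by
  rw [netFlow, sum_filter, sum_filter, Fintype.sum_sum_type, Fintype.sum_sum_type]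
  simp [Fintype.sum_prod_type]

theorem netFlow_state (f : Edge n H → M) (i : Fin n) (t : Fin H) :
    netFlow tail head f (.inr (i, t)) =
      f (.inr (i, t)) -
        (f (.inl (i, t)) + ∑ s : Fin H with s.val + 1 = t.val, f (.inr (i, s))) := by
  rw [netFlow, sum_filter, sum_filter, Fintype.sum_sum_type, Fintype.sum_sum_type]
  simp [Fintype.sum_prod_type, ite_and, sum_filter]

theorem netFlow_sink (f : Edge n H → M) :
    netFlow tail head f (.inl none) = -∑ i, ∑ s : Fin H with s.val + 1 = H, f (.inr (i, s)) := by
  rw [netFlow, sum_filter, sum_filter, Fintype.sum_sum_type, Fintype.sum_sum_type]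
  simp [Fintype.sum_prod_type, sum_filter]

theorem netFlow_flow_mem {G : AddSubgroup M} {x : Fin n → Fin H → M} (hx : ∀ t, ∑ i, x i t ∈ G)
    (v : Vertex n H) : netFlow tail head (flow x) v ∈ G := by
  rcases v with (_ | t) | ⟨i, t⟩
  · rw [netFlow_sink, sum_comm]
    refine neg_mem (sum_mem fun s _ => ?_)
    simp only [flow, cumSum]
    rw [sum_comm]
    exact sum_mem fun ℓ _ => hx ℓ
  · rw [netFlow_seat]
    exact hx t
  · rw [netFlow_state]
    simp only [flow]
    rw [← cumSum_eq_add_sum_prev, sub_self]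
    exact zero_mem G

theorem flow_eq_of_netFlow_eq_zero {δ : Edge n H → M} (hδ : ∀ v, netFlow tail head δ v = 0) :
    flow (fun i t => δ (.inl (i, t))) = δ := by
  funext e
  rcases e with ⟨i, t⟩ | ⟨i, t⟩
  · rfl
  · have := eq_cumSum_of_eq_add_sum_prev (g := fun t => δ (.inr (i, t))) fun t =>
      sub_eq_zero.1 ((netFlow_state δ i t).symm.trans (hδ _))
    exact (congrFun this t).symm

theorem sum_inl_eq_zero_of_netFlow_eq_zero {δ : Edge n H → M}
    (hδ : ∀ v, netFlow tail head δ v = 0) (t : Fin H) : ∑ i, δ (.inl (i, t)) = 0 :=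
  (netFlow_seat δ t).symm.trans (hδ _)

@[simp]
theorem flow_zero : flow (0 : Fin n → Fin H → M) = 0 := by
  funext e
  rcases e with ⟨i, t⟩ | ⟨i, t⟩ <;> simp [flow, cumSum]

theorem eventually_add_smul_mem_apportionmentPolytope {p : Fin n → ℕ} {x d : Fin n → Fin H → ℝ}
    (hx : x ∈ apportionmentPolytope p H) (hd : ∀ t, ∑ i, d i t = 0)
    (hfix : ∀ e, flow x e ∈ (Int.castAddHom ℝ).range → flow d e = 0) :
    ∀ᶠ s in 𝓝 (0 : ℝ), x + s • d ∈ apportionmentPolytope p H := by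
  obtain ⟨hcol, hquota, hnn⟩ := hx
  have hlow := eventually_all.2 fun i => eventually_all.2 fun t =>
    eventually_le_add_mul (hquota i t).1 fun h => hfix (.inr (i, t)) ⟨_, h⟩
  have hup := eventually_all.2 fun i => eventually_all.2 fun t =>
    eventually_add_mul_le (hquota i t).2 fun h => hfix (.inr (i, t)) ⟨_, h.symm⟩
  have hpos := eventually_all.2 fun i => eventually_all.2 fun t =>
    eventually_le_add_mul (hnn i t) fun h => hfix (.inl (i, t)) ⟨0, by simp [flow, h]⟩
  filter_upwards [hlow, hup, hpos] with s hlow hup hpos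
  have hcum (i : Fin n) (t : Fin H) : ∑ ℓ with ℓ ≤ t, (x + s • d) i ℓ =
      cumSum (x i) t + s * cumSum (d i) t := by
    simp [cumSum, sum_add_distrib, mul_sum]
  refine ⟨fun t => ?_, fun i t => ?_, fun i t => ?_⟩
  · simp [sum_add_distrib, ← mul_sum, hcol, hd]
  · rw [hcum]
    exact ⟨hlow i t, hup i t⟩
  · exact hpos i t

end Apportionment

open Apportionment

theorem stmt_19_general {n : ℕ} (p : Fin n → ℕ)
    (H : ℕ)
    (x : Fin n → Fin H → ℝ) (hx : x ∈ Set.extremePoints ℝ (apportionmentPolytope p H)) :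
    ∀ (i : Fin n) (t : Fin H), x i t = 0 ∨ x i t = 1 := by
  obtain ⟨hcol, -, hnn⟩ := hx.1
  have hint : ∀ e, flow x e ∈ (Int.castAddHom ℝ).range := by
    by_contra! ⟨e, he⟩
    obtain ⟨δ, hδ0, hfix, hδ⟩ := exists_ne_zero_netFlow_eq_zero_of_netFlow_mem tail_ne_head
      (netFlow_flow_mem fun t => hcol t ▸ ⟨1, by simp⟩) ⟨e, he⟩
    rw [← flow_eq_of_netFlow_eq_zero hδ] at hδ0 hfix
    have hd : (fun i t => δ (.inl (i, t))) = 0 :=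
      eq_zero_of_mem_extremePoints_of_eventually_add_smul_mem hx
        (eventually_add_smul_mem_apportionmentPolytope hx.1
          (sum_inl_eq_zero_of_netFlow_eq_zero hδ) hfix)
    exact hδ0 (by rw [hd, flow_zero])
  intro i t
  obtain ⟨k, hk⟩ := hint (.inl (i, t))
  simp only [flow, Int.coe_castAddHom] at hk
  have h0 : (0 : ℤ) ≤ k := by exact_mod_cast hk ▸ hnn i t
  have h1 : k ≤ 1 := by
    exact_mod_cast hk ▸ hcol t ▸ single_le_sum (fun j _ => hnn j t) (mem_univ i)
  interval_cases k <;> simp [← hk]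

/-- every extreme point of `K(p,H)` has all coordinates in `{0,1}`. -/
theorem stmt_19 {n : ℕ} (hn : 1 ≤ n) (p : Fin n → ℕ) (hp : ∀ i, 0 < p i)
    (H : ℕ) (hH : 1 ≤ H)
    (x : Fin n → Fin H → ℝ) (hx : x ∈ Set.extremePoints ℝ (apportionmentPolytope p H)) :
    ∀ (i : Fin n) (t : Fin H), x i t = 0 ∨ x i t = 1 :=
  stmt_19_general p H x hx
end
end
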